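/- arXiv:1805.10536 — 3 statements merged into one kernel-verified Lean document; each statement's English description precedes it below -/
import Mathlib

section
/- Let 1 ≤ p ≤ ∞ and let w be a weight of class 𝒲^α for some α > 0. If φ ∈ 𝓛_{p,w*} and c = {c_k}_{k∈ℤ^d} ∈ ℓ_{p,1/w}, then ‖Σ_{k∈ℤ^d} c_k φ_{0k}‖_{p,1/w} ≤ ‖φ‖_{𝓛_{p,w*}} · ‖c‖_{ℓ_{p,1/w}}. -/
open MeasureTheory Filter Finset Metric Set Complex
open scoped ENNReal NNReal Topology BigOperators FourierTransform RealInnerProductSpace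

noncomputable section

/-- Euclidean space `ℝ^d`. -/
abbrev Rd (d : ℕ) : Type := EuclideanSpace ℝ (Fin d)

variable {d : ℕ}

/-- Interpret a bare vector as an element of `ℝ^d`. -/
def toRd (v : Fin d → ℝ) : Rd d := (WithLp.equiv 2 (Fin d → ℝ)).symm v

/-- The integer lattice point `k ∈ ℤ^d` as an element of `ℝ^d`. -/
def intVec (k : Fin d → ℤ) : Rd d := toRd fun i => (k i : ℝ)

/-- A `d × d` real matrix acting on `ℝ^d`. -/
def mApply (M : Matrix (Fin d) (Fin d) ℝ) (x : Rd d) : Rd d :=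
  toRd (M.mulVec (WithLp.equiv 2 (Fin d → ℝ) x))

/-- The operator (euclidean) norm of a `d × d` real matrix. -/
def matOpNorm (M : Matrix (Fin d) (Fin d) ℝ) : ℝ :=
  ‖LinearMap.toContinuousLinearMap (Matrix.toEuclideanLin M)‖

/-- A dilation matrix: all complex eigenvalues are bigger than `1` in modulus. -/
def IsDilationMatrix (M : Matrix (Fin d) (Fin d) ℝ) : Prop :=
  ∀ μ ∈ spectrum ℂ (M.map (algebraMap ℝ ℂ)), 1 < ‖μ‖

/-- The weighted `L_p` norm `‖f w‖_p`, valued in `ℝ≥0∞`. -/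
def wNorm (p : ℝ≥0∞) (w : Rd d → ℝ) (f : Rd d → ℂ) : ℝ≥0∞ :=
  eLpNorm (fun x => (w x : ℂ) * f x) p volume

/-- Membership in the weighted space `L_{p,w}`. -/
def MemWLp (p : ℝ≥0∞) (w : Rd d → ℝ) (f : Rd d → ℂ) : Prop :=
  AEStronglyMeasurable f volume ∧ wNorm p w f < ⊤

/-- The reciprocal weight `1/w`. -/
def invW (w : Rd d → ℝ) : Rd d → ℝ := fun x => (w x)⁻¹

/-- The cube `𝕋^d = [-1/2, 1/2]^d`. -/
def unitCube (d : ℕ) : Set (Rd d) := {x | ∀ i, |x i| ≤ 1 / 2}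

/-- The open cube `(-r, r)^d`. -/
def openCube (d : ℕ) (r : ℝ) : Set (Rd d) := {x | ∀ i, |x i| < r}

/-- The periodization `∑_{k ∈ ℤ^d} |φ(x+k)| |w(x+k)|`, valued in `ℝ≥0∞`. -/
def perSum (w : Rd d → ℝ) (φ : Rd d → ℂ) (x : Rd d) : ℝ≥0∞ :=
  ∑' k : Fin d → ℤ, (‖φ (x + intVec k)‖₊ : ℝ≥0∞) * (‖w (x + intVec k)‖₊ : ℝ≥0∞)

/-- The norm of the space `𝓛_{p,w}`:
`‖ ∑_{k ∈ ℤ^d} |φ(⬝+k) w(⬝+k)| ‖_{L_p([-1/2,1/2]^d)}`. -/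
def LLnorm (p : ℝ≥0∞) (w : Rd d → ℝ) (φ : Rd d → ℂ) : ℝ≥0∞ :=
  if p = ⊤ then essSup (perSum w φ) (volume.restrict (unitCube d))
  else (∫⁻ x in unitCube d, perSum w φ x ^ p.toReal) ^ (1 / p.toReal)

/-- Membership in `𝓛_{p,w}`. -/
def MemLL (p : ℝ≥0∞) (w : Rd d → ℝ) (φ : Rd d → ℂ) : Prop :=
  AEStronglyMeasurable φ volume ∧ LLnorm p w φ < ⊤

/-- The norm of the weighted sequence space `ℓ_{p,w}`. -/
def seqNorm (p : ℝ≥0∞) (w : Rd d → ℝ) (c : (Fin d → ℤ) → ℂ) : ℝ≥0∞ :=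
  if p = ⊤ then ⨆ k, (‖c k‖₊ : ℝ≥0∞) * (‖w (intVec k)‖₊ : ℝ≥0∞)
  else (∑' k, ((‖c k‖₊ : ℝ≥0∞) * (‖w (intVec k)‖₊ : ℝ≥0∞)) ^ p.toReal) ^ (1 / p.toReal)

/-- The class `𝒲^α` of weights, together with the associated data `w*` and `c_w`. -/
structure IsWeight (α : ℝ) (w wstar : Rd d → ℝ) (cw : ℝ) : Prop where
  one_le : ∀ x, 1 ≤ w x
  continuous : Continuous w
  even : ∀ x, w (-x) = w x
  wstar_nonneg : ∀ x, 0 ≤ wstar x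
  wstar_even : ∀ x, wstar (-x) = wstar x
  submult : ∀ x y, w (x + y) ≤ wstar x * w y
  cw_pos : 0 < cw
  growth : ∀ x, wstar x ≤ cw * (1 + ‖x‖ ^ 2) ^ (α / 2)
  dil : ∀ M : Matrix (Fin d) (Fin d) ℝ, IsDilationMatrix M →
    ∃ C' > 0, ∀ (x : Rd d) (j : ℕ), wstar (mApply (M⁻¹ ^ j) x) ≤ C' * wstar x

/-- `g` represents the distributional Fourier transform of `f`:
`⟨𝓕 f, ψ⟩ = ⟨f, 𝓕 ψ⟩` for all test functions `ψ`. -/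
def IsDistribFourier (f g : Rd d → ℂ) : Prop :=
  ∀ ψ : Rd d → ℂ, ContDiff ℝ (⊤ : ℕ∞) ψ → HasCompactSupport ψ →
    ∫ x, f x * 𝓕 ψ x = ∫ ξ, g ξ * ψ ξ

/-- The (distributional) Fourier transform of `g` is supported in `A`. -/
def FourierSuppIn (g : Rd d → ℂ) (A : Set (Rd d)) : Prop :=
  ∀ ψ : Rd d → ℂ, ContDiff ℝ (⊤ : ℕ∞) ψ → HasCompactSupport ψ →
    (∀ ξ ∈ A, ψ ξ = 0) → ∫ x, g x * 𝓕 ψ x = 0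

/-- The best approximation `E_A(f)_{p,w}` of `f` by `L_{p,w} ∩ L_2`-functions
whose Fourier transform is supported in `A`. -/
def bestApprox (p : ℝ≥0∞) (w : Rd d → ℝ) (A : Set (Rd d)) (f : Rd d → ℂ) : ℝ≥0∞ :=
  ⨅ (g : Rd d → ℂ) (_ : MemWLp p w g) (_ : MemLp g 2 volume) (_ : FourierSuppIn g A),
    wNorm p w fun x => f x - g x

/-- The pairing `⟨f, g⟩ = ∫ f ⋅ conj g`. -/
def innerProd (f g : Rd d → ℂ) : ℂ := ∫ x, f x * (starRingEnd ℂ) (g x)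

/-- The integer translate `φ_{0k} = φ(⬝ + k)`. -/
def transl (φ : Rd d → ℂ) (k : Fin d → ℤ) : Rd d → ℂ := fun x => φ (x + intVec k)

/-- The dilated translate `φ_{jk}(x) = m^{j/2} φ(M^j x + k)`, `m = |det M|`. -/
def dilTrans (M : Matrix (Fin d) (Fin d) ℝ) (φ : Rd d → ℂ) (j : ℕ) (k : Fin d → ℤ) :
    Rd d → ℂ := fun x => Real.sqrt (|M.det| ^ j) • φ (mApply (M ^ j) x + intVec k)

/-- The quasi-projection operator `Q_j(f; φ̃, φ) = ∑_{k ∈ ℤ^d} ⟨f, φ̃_{jk}⟩ φ_{jk}`. -/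
def quasiProj (M : Matrix (Fin d) (Fin d) ℝ) (φ φt : Rd d → ℂ) (j : ℕ) (f : Rd d → ℂ) :
    Rd d → ℂ :=
  fun x => ∑' k : Fin d → ℤ, innerProd f (dilTrans M φt j k) * dilTrans M φ j k x

/-- The sampling expansion `m^{-j/2} ∑_{k ∈ ℤ^d} f(-M^{-j}k) φ_{jk}`. -/
def samplingSum (M : Matrix (Fin d) (Fin d) ℝ) (φ : Rd d → ℂ) (j : ℕ) (f : Rd d → ℂ) :
    Rd d → ℂ :=
  fun x => ∑' k : Fin d → ℤ,
    f (-(mApply (M⁻¹ ^ j) (intVec k))) * φ (mApply (M ^ j) x + intVec k)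

/-- `φ` and `φ̃` are strictly compatible with parameter `δ`:
`conj (φ̂) ⋅ φ̃̂ = 1` a.e. on `{|ξ| < δ}`. -/
def StrictCompat (φ φt : Rd d → ℂ) (δ : ℝ) : Prop :=
  ∀ᵐ ξ : Rd d, ‖ξ‖ < δ → (starRingEnd ℂ) (𝓕 φ ξ) * 𝓕 φt ξ = 1

/-- The partial derivative in the `i`-th coordinate direction. -/
def pderivF {E : Type*} [NormedAddCommGroup E] [NormedSpace ℝ E] (i : Fin d)
    (f : Rd d → E) : Rd d → E := fun x => fderiv ℝ f x (EuclideanSpace.single i 1)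

/-- The (classical) partial derivative `D^ν f` for a multi-index `ν ∈ ℤ_+^d`. -/
def multiDeriv {E : Type*} [NormedAddCommGroup E] [NormedSpace ℝ E] (ν : Fin d → ℕ)
    (f : Rd d → E) : Rd d → E :=
  (List.finRange d).foldr (fun i g => (pderivF i)^[ν i] g) f

/-- `φ` and `φ̃` are weakly compatible of order `n`:
`D^β (1 - φ̂ ⋅ conj φ̃̂)(0) = 0` for all `[β] < n`. -/
def WeakCompat (φ φt : Rd d → ℂ) (n : ℕ) : Prop :=
  ∀ β : Fin d → ℕ, (∑ i, β i) < n →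
    multiDeriv β (fun ξ => 1 - 𝓕 φ ξ * (starRingEnd ℂ) (𝓕 φt ξ)) 0 = 0

/-- `g` is the weak (distributional) partial derivative `D^ν f`. -/
def HasWeakDeriv (ν : Fin d → ℕ) (f g : Rd d → ℂ) : Prop :=
  ∀ ψ : Rd d → ℂ, ContDiff ℝ (⊤ : ℕ∞) ψ → HasCompactSupport ψ →
    ∫ x, f x * multiDeriv ν ψ x = (-1 : ℂ) ^ (∑ i, ν i) * ∫ x, g x * ψ x

/-- `Df` is a family of weak derivatives of `f` up to order `n`, all lying in `L_{p,w}`;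
this expresses `f ∈ W^n_{p,w}`. -/
def IsSobolevFamily (p : ℝ≥0∞) (w : Rd d → ℝ) (n : ℕ) (f : Rd d → ℂ)
    (Df : (Fin d → ℕ) → Rd d → ℂ) : Prop :=
  Df (fun _ => 0) = f ∧
    ∀ ν : Fin d → ℕ, (∑ i, ν i) ≤ n → HasWeakDeriv ν f (Df ν) ∧ MemWLp p w (Df ν)

/-- The Sobolev seminorm `‖f‖_{Ẇ^n_{p,w}} = ∑_{[ν]=n} ‖D^ν f‖_{p,w}`. -/
def sobSemi (p : ℝ≥0∞) (w : Rd d → ℝ) (n : ℕ) (Df : (Fin d → ℕ) → Rd d → ℂ) : ℝ≥0∞ :=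
  ∑ ν ∈ Finset.Nat.antidiagonalTuple d n, wNorm p w (Df ν)

/-- The `n`-th difference operator `Δ_h^n f`. -/
def deltaOp (n : ℕ) (h : Rd d) (f : Rd d → ℂ) : Rd d → ℂ := fun x =>
  ∑ ν ∈ Finset.range (n + 1), (-1 : ℂ) ^ ν * (n.choose ν : ℂ) * f (x + (ν : ℝ) • h)

/-- The modulus of smoothness `ω_n(f, t)_{p,w}`. -/
def omegaMod (p : ℝ≥0∞) (w : Rd d → ℝ) (n : ℕ) (f : Rd d → ℂ) (t : ℝ) : ℝ≥0∞ :=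
  ⨆ (h : Rd d) (_ : ‖h‖ < t), wNorm p w (deltaOp n h f)

/-- The anisotropic modulus of smoothness: the supremum of `‖Δ_h^n f‖_{p,w}`
over all steps `h` with `‖A h‖ < 1`. -/
def bigOmegaMod (p : ℝ≥0∞) (w : Rd d → ℝ) (n : ℕ) (A : Rd d → Rd d) (f : Rd d → ℂ) :
    ℝ≥0∞ :=
  ⨆ (h : Rd d) (_ : ‖A h‖ < 1), wNorm p w (deltaOp n h f)

/-- An axis-parallel rectangle (parallelepiped) in `ℝ^d`. -/
def rectSet (a b : Fin d → ℝ) : Set (Rd d) := {x | ∀ i, x i ∈ Set.Icc (a i) (b i)}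

/-- The rectangle Muckenhoupt class `𝒜_p(ℝ^d)`. -/
def MemMuckRect (p : ℝ) (v : Rd d → ℝ) : Prop :=
  (∀ x, 0 ≤ v x) ∧ LocallyIntegrable v volume ∧
    ∃ c : ℝ, ∀ a b : Fin d → ℝ, (∀ i, a i < b i) →
      ((∏ i, (b i - a i))⁻¹ * ∫ x in rectSet a b, v x) *
        ((∏ i, (b i - a i))⁻¹ * ∫ x in rectSet a b, v x ^ (-(1 / (p - 1)))) ^ (p - 1) ≤ c

/-- `φ` belongs to the class `𝓑`, with band data `θ` supported in the
parallelepiped `[a_1,b_1] × ⋯ × [a_d,b_d]`; `θ` is the Fourier transform of `φ`. -/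
def IsBandFn (φ θ : Rd d → ℂ) (a b : Fin d → ℝ) : Prop :=
  (∀ x, φ x = 𝓕⁻ θ x) ∧ Function.support θ ⊆ rectSet a b ∧
    ContDiffOn ℝ d θ (rectSet a b)

end


section AuxLemmas
open MeasureTheory Filter Finset Set
open scoped ENNReal NNReal BigOperators


lemma enorm_tsum_le' {ι : Type*} (g : ι → ℂ) :
    (‖∑' i, g i‖₊ : ℝ≥0∞) ≤ ∑' i, (‖g i‖₊ : ℝ≥0∞) := by
  by_cases h : Summable fun i => ‖g i‖₊
  · rw [← ENNReal.coe_tsum h]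
    exact_mod_cast nnnorm_tsum_le h
  · have h2 : ∑' i, (‖g i‖₊ : ℝ≥0∞) = ⊤ := by
      by_contra hne
      exact h (ENNReal.tsum_coe_ne_top_iff_summable.mp hne)
    simp [h2]

lemma tsum_lintegral_le'' {α : Type*} [MeasurableSpace α] (μ : Measure α)
    {ι : Type*} (f : ι → α → ℝ≥0∞) :
    ∑' i, ∫⁻ a, f i a ∂μ ≤ ∫⁻ a, ∑' i, f i a ∂μ := by
  classical
  refine Summable.tsum_le_of_sum_le ENNReal.summable fun s => ?_
  have h1 : ∑ i ∈ s, ∫⁻ a, f i a ∂μ ≤ ∫⁻ a, ∑ i ∈ s, f i a ∂μ := by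
    induction s using Finset.induction with
    | empty => simp
    | @insert j s hj ih =>
      rw [Finset.sum_insert hj]
      refine (add_le_add le_rfl ih).trans ?_
      refine (MeasureTheory.le_lintegral_add _ _).trans_eq ?_
      congr 1
      funext a
      rw [Finset.sum_insert hj]
  exact h1.trans (lintegral_mono fun a => ENNReal.sum_le_tsum s)

lemma mink_tsum' {J K : Type*} {q : ℝ} (hq : 1 ≤ q) (f : J → K → ℝ≥0∞) :
    ∑' m : K, (∑' j : J, f j m) ^ q ≤ (∑' j : J, (∑' m, f j m ^ q) ^ (1/q)) ^ q := by
  classical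
  have hq0 : (0:ℝ) < q := lt_of_lt_of_le one_pos hq
  have key : ∀ x y : ℝ≥0∞, x ^ (1/q) ≤ y → x ≤ y ^ q := by
    intro x y h
    have h2 := ENNReal.rpow_le_rpow h hq0.le
    rwa [← ENNReal.rpow_mul, one_div_mul_cancel hq0.ne', ENNReal.rpow_one] at h2
  have key2 : ∀ x y : ℝ≥0∞, x ≤ y ^ q → x ^ (1/q) ≤ y := by
    intro x y h
    have h2 := ENNReal.rpow_le_rpow h (by positivity : (0:ℝ) ≤ 1/q)
    rwa [← ENNReal.rpow_mul, mul_one_div_cancel hq0.ne', ENNReal.rpow_one] at h2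
  set c : J → ℝ≥0∞ := fun j => (∑' m, f j m ^ q) ^ (1/q) with hc
  have two : ∀ a b : K → ℝ≥0∞,
      (∑' m, (a m + b m) ^ q) ^ (1/q) ≤ (∑' m, a m ^ q) ^ (1/q) + (∑' m, b m ^ q) ^ (1/q) := by
    intro a b
    refine key2 _ _ (Summable.tsum_le_of_sum_le ENNReal.summable fun t => key _ _ ?_)
    calc (∑ m ∈ t, (a m + b m) ^ q) ^ (1/q)
        ≤ (∑ m ∈ t, a m ^ q) ^ (1/q) + (∑ m ∈ t, b m ^ q) ^ (1/q) := ENNReal.Lp_add_le t _ _ hq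
      _ ≤ _ := add_le_add (ENNReal.rpow_le_rpow (ENNReal.sum_le_tsum t) (by positivity))
                 (ENNReal.rpow_le_rpow (ENNReal.sum_le_tsum t) (by positivity))

  have fin : ∀ s : Finset J, (∑' m, (∑ j ∈ s, f j m) ^ q) ^ (1/q) ≤ ∑ j ∈ s, c j := by
    intro s
    induction s using Finset.induction with
    | empty =>
      have e1 : (0:ℝ≥0∞) ^ q = 0 := ENNReal.zero_rpow_of_pos hq0
      have e2 : (0:ℝ≥0∞) ^ (1/q) = 0 := ENNReal.zero_rpow_of_pos (by positivity)
      simp [e1, e2, hq0]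
    | @insert j s hj ih =>
      rw [Finset.sum_insert hj]
      simp_rw [Finset.sum_insert hj]
      exact ((two (f j) (fun m => ∑ i ∈ s, f i m)).trans (add_le_add le_rfl ih))
  refine Summable.tsum_le_of_sum_le ENNReal.summable fun t => ?_
  have hmono : ∀ m : K, Monotone fun s : Finset J => (∑ j ∈ s, f j m) ^ q :=
    fun m s₁ s₂ h => ENNReal.rpow_le_rpow
      (Finset.sum_le_sum_of_subset h) hq0.le
  have hrw : ∀ m, (∑' j, f j m) ^ q = ⨆ s : Finset J, (∑ j ∈ s, f j m) ^ q := by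
    intro m
    rw [ENNReal.tsum_eq_iSup_sum]
    have h := (ENNReal.orderIsoRpow q hq0).map_iSup (fun s : Finset J => ∑ j ∈ s, f j m)
    simp only [ENNReal.orderIsoRpow_apply] at h
    exact h
  calc ∑ m ∈ t, (∑' j, f j m) ^ q
      = ∑ m ∈ t, ⨆ s : Finset J, (∑ j ∈ s, f j m) ^ q := by simp_rw [hrw]
    _ = ⨆ s : Finset J, ∑ m ∈ t, (∑ j ∈ s, f j m) ^ q :=
        ENNReal.finsetSum_iSup_of_monotone (fun m => hmono m)
    _ ≤ (∑' j, c j) ^ q := by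
        refine iSup_le fun s => key _ _ ?_
        calc (∑ m ∈ t, (∑ j ∈ s, f j m) ^ q) ^ (1/q)
            ≤ (∑' m, (∑ j ∈ s, f j m) ^ q) ^ (1/q) :=
              ENNReal.rpow_le_rpow (ENNReal.sum_le_tsum t) (by positivity)
          _ ≤ ∑ j ∈ s, c j := fin s
          _ ≤ ∑' j, c j := ENNReal.sum_le_tsum s


section RdAux
variable {d : ℕ}

lemma intVec_add' (a b : Fin d → ℤ) : intVec (a + b) = intVec a + intVec b := by
  ext i
  show ((a i + b i : ℤ) : ℝ) = ((a i : ℝ) + (b i : ℝ))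
  push_cast
  ring

lemma perSum_add_intVec (w : Rd d → ℝ) (φ : Rd d → ℂ) (x : Rd d) (m : Fin d → ℤ) :
    perSum w φ (x + intVec m) = perSum w φ x := by
  show (∑' k : Fin d → ℤ, (‖φ ((x + intVec m) + intVec k)‖₊ : ℝ≥0∞) * ‖w ((x + intVec m) + intVec k)‖₊)
      = ∑' k : Fin d → ℤ, (‖φ (x + intVec k)‖₊ : ℝ≥0∞) * ‖w (x + intVec k)‖₊
  rw [← Equiv.tsum_eq (Equiv.addLeft m)
    (fun k => (‖φ (x + intVec k)‖₊ : ℝ≥0∞) * ‖w (x + intVec k)‖₊)]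
  refine tsum_congr fun k => ?_
  have h1 : (x + intVec m) + intVec k = x + intVec (Equiv.addLeft m k) := by
    show (x + intVec m) + intVec k = x + intVec (m + k)
    rw [intVec_add', add_assoc]
  rw [h1]

end RdAux
end AuxLemmas

open scoped Pointwise in
/-- boundedness of synthesis with integer translates,
`‖∑ c_k φ(⬝+k)‖_{p,1/w} ≤ ‖φ‖_{𝓛_{p,w*}} ‖c‖_{ℓ_{p,1/w}}`. -/
theorem statement6 {d : ℕ} (p : ℝ≥0∞) (hp : 1 ≤ p) (α : ℝ) (hα : 0 < α)
    (w wstar : Rd d → ℝ) (cw : ℝ) (hw : IsWeight α w wstar cw)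
    (φ : Rd d → ℂ) (hφ : MemLL p wstar φ)
    (c : (Fin d → ℤ) → ℂ) (hc : seqNorm p (invW w) c < ⊤) :
    wNorm p (invW w) (fun x => ∑' k : Fin d → ℤ, c k * φ (x + intVec k)) ≤
      LLnorm p wstar φ * seqNorm p (invW w) c := by
  classical
  set A : (Fin d → ℤ) → ℝ≥0∞ :=
    fun k => (‖c k‖₊ : ℝ≥0∞) * (‖invW w (intVec k)‖₊ : ℝ≥0∞) with hA
  set G : (Fin d → ℤ) → Rd d → ℝ≥0∞ :=
    fun k x => (‖φ (x + intVec k)‖₊ : ℝ≥0∞) * (‖wstar (x + intVec k)‖₊ : ℝ≥0∞) with hG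
  set T : Rd d → ℝ≥0∞ := fun x => ∑' k : Fin d → ℤ, A k * G k x with hT
  have hw_pos : ∀ x, (0:ℝ) < w x := fun x => lt_of_lt_of_le one_pos (hw.one_le x)
  -- the basic weight inequality
  have hkey : ∀ (x : Rd d) (k : Fin d → ℤ),
      (‖invW w x‖₊ : ℝ≥0∞) ≤
        (‖invW w (intVec k)‖₊ : ℝ≥0∞) * (‖wstar (x + intVec k)‖₊ : ℝ≥0∞) := by
    intro x k
    have h2 := hw.submult (x + intVec k) (-x)
    rw [hw.even x] at h2
    have h3 : (x + intVec k) + -x = intVec k := by abel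
    rw [h3] at h2
    have hreal : (w x)⁻¹ ≤ (w (intVec k))⁻¹ * wstar (x + intVec k) := by
      rw [inv_eq_one_div, inv_eq_one_div, one_div_mul_eq_div,
        div_le_div_iff₀ (hw_pos x) (hw_pos (intVec k))]
      nlinarith [h2, hw_pos x, hw_pos (intVec k)]
    have e1 : (‖invW w x‖₊ : ℝ≥0∞) = ENNReal.ofReal ((w x)⁻¹) :=
      Real.enorm_eq_ofReal (inv_nonneg.mpr (hw_pos x).le)
    have e2 : (‖invW w (intVec k)‖₊ : ℝ≥0∞) = ENNReal.ofReal ((w (intVec k))⁻¹) :=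
      Real.enorm_eq_ofReal (inv_nonneg.mpr (hw_pos _).le)
    have e3 : (‖wstar (x + intVec k)‖₊ : ℝ≥0∞) = ENNReal.ofReal (wstar (x + intVec k)) :=
      Real.enorm_eq_ofReal (hw.wstar_nonneg _)
    rw [e1, e2, e3, ← ENNReal.ofReal_mul (inv_nonneg.mpr (hw_pos _).le)]
    exact ENNReal.ofReal_le_ofReal hreal
  -- pointwise bound
  have hpt : ∀ x : Rd d,
      (‖(invW w x : ℂ) * ∑' k : Fin d → ℤ, c k * φ (x + intVec k)‖₊ : ℝ≥0∞) ≤ T x := by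
    intro x
    calc (‖(invW w x : ℂ) * ∑' k : Fin d → ℤ, c k * φ (x + intVec k)‖₊ : ℝ≥0∞)
        = (‖invW w x‖₊ : ℝ≥0∞) * (‖∑' k : Fin d → ℤ, c k * φ (x + intVec k)‖₊ : ℝ≥0∞) := by
          rw [nnnorm_mul, Complex.nnnorm_real]
          push_cast
          ring
      _ ≤ (‖invW w x‖₊ : ℝ≥0∞) * ∑' k : Fin d → ℤ, (‖c k * φ (x + intVec k)‖₊ : ℝ≥0∞) :=
          mul_le_mul' le_rfl (enorm_tsum_le' _)
      _ = ∑' k : Fin d → ℤ, (‖invW w x‖₊ : ℝ≥0∞) * (‖c k * φ (x + intVec k)‖₊ : ℝ≥0∞) :=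
          ENNReal.tsum_mul_left.symm
      _ ≤ T x := by
          refine ENNReal.tsum_le_tsum fun k => ?_
          rw [nnnorm_mul]
          push_cast
          calc (‖invW w x‖₊ : ℝ≥0∞) * ((‖c k‖₊ : ℝ≥0∞) * (‖φ (x + intVec k)‖₊ : ℝ≥0∞))
              ≤ ((‖invW w (intVec k)‖₊ : ℝ≥0∞) * (‖wstar (x + intVec k)‖₊ : ℝ≥0∞)) *
                  ((‖c k‖₊ : ℝ≥0∞) * (‖φ (x + intVec k)‖₊ : ℝ≥0∞)) :=
                mul_le_mul' (hkey x k) le_rfl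
            _ = A k * G k x := by rw [hA, hG]; ring
  -- half-open cube and the covering
  set Dh : Set (Rd d) := {x | ∀ i, -(1/2 : ℝ) ≤ x i ∧ x i < 1/2} with hDh
  have hDsub : Dh ⊆ unitCube d := fun x hx i => abs_le.mpr ⟨(hx i).1, (hx i).2.le⟩
  have hcover : ∀ x : Rd d, ∃ m : Fin d → ℤ, x ∈ intVec m +ᵥ Dh := by
    intro x
    refine ⟨fun i => ⌊x i + 1/2⌋, ?_⟩
    refine Set.mem_vadd_set.mpr ⟨x - intVec (fun i => ⌊x i + 1/2⌋), fun i => ?_, by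
      show intVec _ + _ = x
      abel⟩
    have hfl : ((⌊x i + 1/2⌋ : ℤ) : ℝ) ≤ x i + 1/2 := Int.floor_le _
    have hfl2 : x i + 1/2 < ((⌊x i + 1/2⌋ : ℤ) : ℝ) + 1 := Int.lt_floor_add_one _
    have hco : (x - intVec fun i => ⌊x i + 1/2⌋) i = x i - ((⌊x i + 1/2⌋ : ℤ) : ℝ) := rfl
    rw [hco]
    constructor <;> linarith
  have huniv : (Set.univ : Set (Rd d)) ⊆ ⋃ m : Fin d → ℤ, intVec m +ᵥ Dh := by
    intro x _
    obtain ⟨m, hm⟩ := hcover x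
    exact Set.mem_iUnion.mpr ⟨m, hm⟩
  -- translation identity for set lintegrals
  have htrans : ∀ (H : Rd d → ℝ≥0∞) (m : Fin d → ℤ),
      ∫⁻ x in intVec m +ᵥ Dh, H x = ∫⁻ x in Dh, H (x + intVec m) := by
    intro H m
    have hmp : MeasurePreserving (fun x : Rd d => x + intVec m) volume volume :=
      measurePreserving_add_right volume (intVec m)
    have hemb : MeasurableEmbedding (fun x : Rd d => x + intVec m) :=
      (Homeomorph.addRight (intVec m)).measurableEmbedding
    have h := hmp.setLIntegral_comp_emb hemb H Dh
    have himg : (fun x : Rd d => x + intVec m) '' Dh = intVec m +ᵥ Dh := by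
      ext y
      constructor
      · rintro ⟨x, hx, rfl⟩
        exact Set.mem_vadd_set.mpr ⟨x, hx, add_comm (intVec m) x⟩
      · intro hy
        obtain ⟨x, hx, hxy⟩ := Set.mem_vadd_set.mp hy
        exact ⟨x, hx, by rw [← hxy]; exact add_comm x (intVec m)⟩
    rw [himg] at h
    exact h.symm
  rcases eq_or_ne p ⊤ with hp_top | hp_top
  · -- case p = ∞
    subst hp_top
    have hLL : LLnorm ⊤ wstar φ = essSup (perSum wstar φ) (volume.restrict (unitCube d)) := by
      rw [LLnorm, if_pos rfl]
    have hseq : seqNorm ⊤ (invW w) c = ⨆ k, A k := by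
      rw [seqNorm, if_pos rfl]
    set C : ℝ≥0∞ := essSup (perSum wstar φ) (volume.restrict (unitCube d)) with hC
    set Ss : ℝ≥0∞ := ⨆ k, A k with hSs
    -- a.e. bound for the periodization
    have hcube_meas : MeasurableSet (unitCube d) := by
      have hrw : unitCube d = ⋂ i, (fun x : Rd d => x i) ⁻¹' (Set.Icc (-(1/2:ℝ)) (1/2)) := by
        ext x
        simp only [unitCube, Set.mem_setOf_eq, Set.mem_iInter, Set.mem_preimage, Set.mem_Icc]
        exact forall_congr' fun i => abs_le
      rw [hrw]
      refine MeasurableSet.iInter fun i => ?_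
      have hcont : Continuous fun x : Rd d => x i :=
        (continuous_apply i).comp (PiLp.continuous_ofLp (p := 2) (β := fun _ : Fin d => ℝ))
      exact hcont.measurable measurableSet_Icc
    have hae : ∀ᵐ x : Rd d, perSum wstar φ x ≤ C := by
      have h1 : (volume.restrict (unitCube d)) {x : Rd d | ¬ perSum wstar φ x ≤ C} = 0 := by
        have h0 := ENNReal.ae_le_essSup (μ := volume.restrict (unitCube d)) (perSum wstar φ)
        rw [ae_iff] at h0
        exact h0
      rw [Measure.restrict_apply' hcube_meas] at h1
      have hsubN : {x : Rd d | ¬ perSum wstar φ x ≤ C} ⊆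
          ⋃ m : Fin d → ℤ, intVec m +ᵥ ({x : Rd d | ¬ perSum wstar φ x ≤ C} ∩ Dh) := by
        intro x hx
        obtain ⟨m, hm⟩ := hcover x
        obtain ⟨r, hr, hrx⟩ := Set.mem_vadd_set.mp hm
        refine Set.mem_iUnion.mpr ⟨m, Set.mem_vadd_set.mpr ⟨r, ⟨?_, hr⟩, hrx⟩⟩
        have hxr : x = r + intVec m := by rw [← hrx]; show intVec m + r = _; abel
        have : perSum wstar φ r = perSum wstar φ x := by
          rw [hxr, perSum_add_intVec]
        simpa [Set.mem_setOf_eq, this] using hx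
      have hnull : volume ({x : Rd d | ¬ perSum wstar φ x ≤ C} ∩ Dh) = 0 :=
        measure_mono_null (Set.inter_subset_inter_right _ hDsub) h1
      have : volume {x : Rd d | ¬ perSum wstar φ x ≤ C} = 0 := by
        refine measure_mono_null hsubN (measure_iUnion_null fun m => ?_)
        rw [measure_vadd]
        exact hnull
      rw [ae_iff]
      exact this
    -- conclude
    rw [hLL, hseq]
    show wNorm ⊤ (invW w) _ ≤ _
    rw [wNorm, eLpNorm_exponent_top]
    unfold eLpNormEssSup
    refine essSup_le_of_ae_le _ ?_
    filter_upwards [hae] with x hx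
    calc (‖(invW w x : ℂ) * ∑' k : Fin d → ℤ, c k * φ (x + intVec k)‖₊ : ℝ≥0∞)
        ≤ T x := hpt x
      _ ≤ ∑' k : Fin d → ℤ, Ss * G k x := ENNReal.tsum_le_tsum fun k =>
          mul_le_mul' (le_iSup (fun k => A k) k) le_rfl
      _ = Ss * perSum wstar φ x := ENNReal.tsum_mul_left
      _ ≤ Ss * C := mul_le_mul' le_rfl hx
      _ = C * Ss := mul_comm _ _
  · -- case p finite
    have hp0 : p ≠ 0 := (lt_of_lt_of_le zero_lt_one hp).ne'
    set q : ℝ := p.toReal with hq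
    have hq1 : (1:ℝ) ≤ q := by
      rw [hq, ← ENNReal.toReal_one]
      exact ENNReal.toReal_mono hp_top hp
    have hq0 : (0:ℝ) < q := lt_of_lt_of_le one_pos hq1
    set S : ℝ≥0∞ := ∑' k : Fin d → ℤ, A k ^ q with hS
    set I : ℝ≥0∞ := ∫⁻ x in unitCube d, perSum wstar φ x ^ q with hI
    have hseq : seqNorm p (invW w) c = S ^ (1/q) := by rw [seqNorm, if_neg hp_top]
    have hLL : LLnorm p wstar φ = I ^ (1/q) := by rw [LLnorm, if_neg hp_top]
    have hS_ne : S ≠ ⊤ := by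
      intro htop
      rw [hseq, htop, ENNReal.top_rpow_of_pos (by positivity)] at hc
      exact (lt_irrefl _ hc).elim
    -- pointwise Young inequality
    have hyoung : ∀ x : Rd d,
        ∑' m : Fin d → ℤ, (T (x + intVec m)) ^ q ≤ perSum wstar φ x ^ q * S := by
      intro x
      set B : (Fin d → ℤ) → ℝ≥0∞ := fun j => G j x with hB
      have h1 : ∀ m : Fin d → ℤ, T (x + intVec m) = ∑' j : Fin d → ℤ, B j * A (j - m) := by
        intro m
        rw [← Equiv.tsum_eq (Equiv.addLeft m) (fun j => B j * A (j - m))]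
        refine tsum_congr fun k => ?_
        have hGk : G k (x + intVec m) = B (Equiv.addLeft m k) := by
          show (‖φ ((x + intVec m) + intVec k)‖₊ : ℝ≥0∞) * (‖wstar ((x + intVec m) + intVec k)‖₊ : ℝ≥0∞)
              = (‖φ (x + intVec (m + k))‖₊ : ℝ≥0∞) * (‖wstar (x + intVec (m + k))‖₊ : ℝ≥0∞)
          have h4 : (x + intVec m) + intVec k = x + intVec (m + k) := by
            rw [intVec_add', add_assoc]
          rw [h4]
        have hAk : A ((Equiv.addLeft m k) - m) = A k := by
          have : (Equiv.addLeft m k) - m = k := by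
            show m + k - m = k
            abel
          rw [this]
        rw [hGk, ← hAk]
        ring
      calc ∑' m : Fin d → ℤ, (T (x + intVec m)) ^ q
          = ∑' m : Fin d → ℤ, (∑' j : Fin d → ℤ, B j * A (j - m)) ^ q := by
            refine tsum_congr fun m => ?_
            rw [h1 m]
        _ ≤ (∑' j : Fin d → ℤ, (∑' m : Fin d → ℤ, (B j * A (j - m)) ^ q) ^ (1/q)) ^ q :=
            mink_tsum' hq1 _
        _ = (perSum wstar φ x * S ^ (1/q)) ^ q := by
            congr 1
            have hin : ∀ j : Fin d → ℤ,
                (∑' m : Fin d → ℤ, (B j * A (j - m)) ^ q) ^ (1/q) = B j * S ^ (1/q) := by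
              intro j
              have h2 : ∀ m : Fin d → ℤ, (B j * A (j - m)) ^ q = B j ^ q * A (j - m) ^ q :=
                fun m => ENNReal.mul_rpow_of_nonneg _ _ hq0.le
              have h3 : ∑' m : Fin d → ℤ, A (j - m) ^ q = S := by
                rw [hS, ← Equiv.tsum_eq (Equiv.subLeft j) (fun m => A m ^ q)]
                simp only [Equiv.subLeft_apply]
              calc (∑' m : Fin d → ℤ, (B j * A (j - m)) ^ q) ^ (1/q)
                  = (B j ^ q * ∑' m : Fin d → ℤ, A (j - m) ^ q) ^ (1/q) := by
                    rw [← ENNReal.tsum_mul_left]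
                    congr 1
                    exact tsum_congr h2
                _ = (B j ^ q) ^ (1/q) * S ^ (1/q) := by
                    rw [h3, ENNReal.mul_rpow_of_nonneg _ _ (by positivity : (0:ℝ) ≤ 1/q)]
                _ = B j * S ^ (1/q) := by
                    rw [← ENNReal.rpow_mul, mul_one_div_cancel hq0.ne', ENNReal.rpow_one]
            calc ∑' j : Fin d → ℤ, (∑' m : Fin d → ℤ, (B j * A (j - m)) ^ q) ^ (1/q)
                = ∑' j : Fin d → ℤ, B j * S ^ (1/q) := tsum_congr hin
              _ = (∑' j : Fin d → ℤ, B j) * S ^ (1/q) := ENNReal.tsum_mul_right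
              _ = perSum wstar φ x * S ^ (1/q) := rfl
        _ = perSum wstar φ x ^ q * S := by
            rw [ENNReal.mul_rpow_of_nonneg _ _ hq0.le, ← ENNReal.rpow_mul,
              one_div_mul_cancel hq0.ne', ENNReal.rpow_one]
    -- main integral estimate
    have hmain : (∫⁻ x, (‖(invW w x : ℂ) *
        ∑' k : Fin d → ℤ, c k * φ (x + intVec k)‖₊ : ℝ≥0∞) ^ q) ≤ I * S := by
      calc (∫⁻ x, (‖(invW w x : ℂ) * ∑' k : Fin d → ℤ, c k * φ (x + intVec k)‖₊ : ℝ≥0∞) ^ q)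
          ≤ ∫⁻ x, T x ^ q := lintegral_mono fun x => ENNReal.rpow_le_rpow (hpt x) hq0.le
        _ = ∫⁻ x in Set.univ, T x ^ q := (setLIntegral_univ _).symm
        _ ≤ ∫⁻ x in ⋃ m : Fin d → ℤ, intVec m +ᵥ Dh, T x ^ q :=
            lintegral_mono' (Measure.restrict_mono huniv le_rfl) le_rfl
        _ ≤ ∑' m : Fin d → ℤ, ∫⁻ x in intVec m +ᵥ Dh, T x ^ q :=
            lintegral_iUnion_le _ _
        _ = ∑' m : Fin d → ℤ, ∫⁻ x in Dh, T (x + intVec m) ^ q :=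
            tsum_congr fun m => htrans (fun y => T y ^ q) m
        _ ≤ ∫⁻ x in Dh, ∑' m : Fin d → ℤ, T (x + intVec m) ^ q :=
            tsum_lintegral_le'' _ _
        _ ≤ ∫⁻ x in Dh, perSum wstar φ x ^ q * S := lintegral_mono fun x => hyoung x
        _ ≤ ∫⁻ x in unitCube d, perSum wstar φ x ^ q * S :=
            lintegral_mono' (Measure.restrict_mono hDsub le_rfl) le_rfl
        _ = I * S := lintegral_mul_const' S _ hS_ne
    -- conclude
    rw [hseq, hLL]
    show wNorm p (invW w) _ ≤ _
    rw [wNorm, eLpNorm_eq_lintegral_rpow_enorm_toReal hp0 hp_top, ← hq]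
    calc (∫⁻ x, (‖(invW w x : ℂ) * ∑' k : Fin d → ℤ, c k * φ (x + intVec k)‖₊ : ℝ≥0∞) ^ q) ^ (1/q)
        ≤ (I * S) ^ (1/q) := ENNReal.rpow_le_rpow hmain (by positivity)
      _ = I ^ (1/q) * S ^ (1/q) := ENNReal.mul_rpow_of_nonneg _ _ (by positivity)
end

section
/- Let 1 ≤ p ≤ ∞, 1/p + 1/q = 1, let w be a weight of class 𝒲^α for some α > 0, let f ∈ L_{p,1/w}(ℝ^d), and let φ ∈ 𝓛_{q,w*}. Then (Σ_{k∈ℤ^d} |⟨f, φ_{0k}⟩ / w(k)|^p)^{1/p} ≤ ‖φ‖_{𝓛_{q,w*}} · ‖f‖_{p,1/w}. -/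
open MeasureTheory Filter Finset Metric Set Complex
open scoped ENNReal NNReal Topology BigOperators FourierTransform RealInnerProductSpace

noncomputable section
namespace S7Aux

open MeasureTheory
open scoped ENNReal NNReal

lemma rpow_cancel {p : ℝ} (hp : p ≠ 0) (x : ℝ≥0∞) : (x ^ (1/p)) ^ p = x := by
  rw [← ENNReal.rpow_mul, one_div, inv_mul_cancel₀ hp, ENNReal.rpow_one]

lemma rpow_cancel' {p : ℝ} (hp : p ≠ 0) (x : ℝ≥0∞) : (x ^ p) ^ (1/p) = x := by
  rw [← ENNReal.rpow_mul, one_div, mul_inv_cancel₀ hp, ENNReal.rpow_one]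

lemma sum_lintegral_le {α : Type*} {ι : Type*} [MeasurableSpace α] (μ : Measure α)
    (s : Finset ι) (F : ι → α → ℝ≥0∞) :
    ∑ i ∈ s, ∫⁻ x, F i x ∂μ ≤ ∫⁻ x, ∑ i ∈ s, F i x ∂μ := by
  classical
  induction s using Finset.induction with
  | empty => simp
  | @insert a s ha ih =>
    rw [Finset.sum_insert ha]
    calc ∫⁻ x, F a x ∂μ + ∑ i ∈ s, ∫⁻ x, F i x ∂μ
        ≤ ∫⁻ x, F a x ∂μ + ∫⁻ x, ∑ i ∈ s, F i x ∂μ := add_le_add_right ih _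
      _ ≤ ∫⁻ x, (F a x + ∑ i ∈ s, F i x) ∂μ := le_lintegral_add _ _
      _ = ∫⁻ x, ∑ i ∈ insert a s, F i x ∂μ := by
          refine lintegral_congr fun x => ?_
          rw [Finset.sum_insert ha]

lemma minkowski_lintegral {α : Type*} {ι : Type*} [MeasurableSpace α] [Countable ι]
    (μ : Measure α) {p q : ℝ} (hpq : Real.HolderConjugate p q) (F : ι → α → ℝ≥0∞) :
    (∑' i, (∫⁻ x, F i x ∂μ) ^ p) ^ (1/p) ≤ ∫⁻ x, (∑' i, F i x ^ p) ^ (1/p) ∂μ := by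
  classical
  have hp0 : (0:ℝ) < p := hpq.pos
  have hq0 : (0:ℝ) < q := hpq.symm.pos
  set R := ∫⁻ x, (∑' i, F i x ^ p) ^ (1/p) ∂μ with hR
  by_cases htop : ∃ i, ∫⁻ x, F i x ∂μ = ⊤
  · obtain ⟨i, hi⟩ := htop
    have hle : (⊤:ℝ≥0∞) ≤ R := by
      calc (⊤:ℝ≥0∞) = ∫⁻ x, F i x ∂μ := hi.symm
        _ ≤ R := lintegral_mono fun x => by
            calc F i x = (F i x ^ p) ^ (1/p) := (rpow_cancel' hp0.ne' _).symm
              _ ≤ (∑' j, F j x ^ p) ^ (1/p) :=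
                ENNReal.rpow_le_rpow (ENNReal.le_tsum i) (one_div_pos.mpr hp0).le
    exact le_top.trans hle
  push_neg at htop
  have main : ∀ s : Finset ι, (∑ i ∈ s, (∫⁻ x, F i x ∂μ) ^ p) ^ (1/p) ≤ R := by
    intro s
    set M := ∑ i ∈ s, (∫⁻ x, F i x ∂μ) ^ p with hM
    have hMtop : M ≠ ⊤ := by
      rw [hM]
      refine (ENNReal.sum_lt_top.mpr fun i _ => ?_).ne
      exact ENNReal.rpow_lt_top_of_nonneg hp0.le (htop i)
    by_cases hM0 : M = 0
    · rw [hM0, ENNReal.zero_rpow_of_pos (one_div_pos.mpr hp0)]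
      exact zero_le
    have hconst_top : ∀ i, (∫⁻ x, F i x ∂μ) ^ (p - 1) ≠ ⊤ := fun i =>
      ENNReal.rpow_ne_top_of_nonneg (by linarith [hpq.lt]) (htop i)
    have hsplit : ∀ i, (∫⁻ x, F i x ∂μ) ^ p
        = (∫⁻ x, F i x ∂μ) ^ (p - 1) * ∫⁻ x, F i x ∂μ := by
      intro i
      rcases eq_or_ne (∫⁻ x, F i x ∂μ) 0 with h | h
      · rw [h, mul_zero, ENNReal.zero_rpow_of_pos hp0]
      · conv_lhs => rw [show p = (p-1)+1 by ring]
        rw [ENNReal.rpow_add _ _ h (htop i), ENNReal.rpow_one]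
    have hconsts : ∑ i ∈ s, ((∫⁻ y, F i y ∂μ) ^ (p - 1)) ^ q = M := by
      rw [hM]
      refine Finset.sum_congr rfl fun i _ => ?_
      rw [← ENNReal.rpow_mul, hpq.sub_one_mul_conj]
    have hMq_top : (∑ i ∈ s, ((∫⁻ y, F i y ∂μ) ^ (p - 1)) ^ q) ^ (1/q) ≠ ⊤ := by
      rw [hconsts]
      exact ENNReal.rpow_ne_top_of_nonneg (one_div_pos.mpr hq0).le hMtop
    have step : M ≤ M ^ (1/q) * R := by
      calc M = ∑ i ∈ s, (∫⁻ x, F i x ∂μ) ^ (p - 1) * ∫⁻ x, F i x ∂μ :=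
            Finset.sum_congr rfl fun i _ => hsplit i
        _ = ∑ i ∈ s, ∫⁻ x, (∫⁻ y, F i y ∂μ) ^ (p - 1) * F i x ∂μ :=
            Finset.sum_congr rfl fun i _ =>
              (lintegral_const_mul' _ _ (hconst_top i)).symm
        _ ≤ ∫⁻ x, ∑ i ∈ s, (∫⁻ y, F i y ∂μ) ^ (p - 1) * F i x ∂μ := sum_lintegral_le μ s _
        _ ≤ ∫⁻ x, (∑ i ∈ s, ((∫⁻ y, F i y ∂μ) ^ (p - 1)) ^ q) ^ (1/q)
              * (∑ i ∈ s, F i x ^ p) ^ (1/p) ∂μ :=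
            lintegral_mono fun x => ENNReal.inner_le_Lp_mul_Lq s _ _ hpq.symm
        _ = (∑ i ∈ s, ((∫⁻ y, F i y ∂μ) ^ (p - 1)) ^ q) ^ (1/q)
              * ∫⁻ x, (∑ i ∈ s, F i x ^ p) ^ (1/p) ∂μ :=
            lintegral_const_mul' _ _ hMq_top
        _ ≤ M ^ (1/q) * R := by
            rw [hconsts]
            refine mul_le_mul_right (lintegral_mono fun x => ?_) _
            exact ENNReal.rpow_le_rpow (ENNReal.sum_le_tsum s) (one_div_pos.mpr hp0).le
    have hstep2 : M ^ (-(1/q)) * M ≤ R := by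
      have h2 := mul_le_mul_right step (M ^ (-(1/q)))
      rwa [← mul_assoc, ← ENNReal.rpow_add _ _ hM0 hMtop, neg_add_cancel,
        ENNReal.rpow_zero, one_mul] at h2
    calc M ^ (1/p) = M ^ (-(1/q) + 1) := by
          congr 1
          have := hpq.inv_add_inv_eq_one
          rw [one_div, one_div]
          linarith
      _ = M ^ (-(1/q)) * M := by
          rw [ENNReal.rpow_add _ _ hM0 hMtop, ENNReal.rpow_one]
      _ ≤ R := hstep2
  rw [← ENNReal.rpow_le_rpow_iff hp0, rpow_cancel hp0.ne']
  rw [ENNReal.tsum_eq_iSup_sum]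
  refine iSup_le fun s => ?_
  calc ∑ i ∈ s, (∫⁻ x, F i x ∂μ) ^ p
      = ((∑ i ∈ s, (∫⁻ x, F i x ∂μ) ^ p) ^ (1/p)) ^ p := (rpow_cancel hp0.ne' _).symm
    _ ≤ R ^ p := ENNReal.rpow_le_rpow (main s) hp0.le


lemma tsum_lintegral_le {α : Type*} {ι : Type*} [MeasurableSpace α] [Countable ι]
    (μ : Measure α) (F : ι → α → ℝ≥0∞) :
    ∑' i, ∫⁻ x, F i x ∂μ ≤ ∫⁻ x, ∑' i, F i x ∂μ := by
  rw [ENNReal.tsum_eq_iSup_sum]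
  refine iSup_le fun s => (sum_lintegral_le μ s F).trans (lintegral_mono fun x => ?_)
  exact ENNReal.sum_le_tsum s


lemma lintegral_mul_le_one_sided {α : Type*} [MeasurableSpace α] (μ : Measure α)
    {p q : ℝ} (hpq : Real.HolderConjugate p q) {f : α → ℝ≥0∞} (g : α → ℝ≥0∞)
    (hf : AEMeasurable f μ) (hftop : (∫⁻ x, f x ^ p ∂μ) ^ (1/p) ≠ ⊤) :
    ∫⁻ x, f x * g x ∂μ ≤ (∫⁻ x, f x ^ p ∂μ) ^ (1/p) * (∫⁻ x, g x ^ q ∂μ) ^ (1/q) := by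
  have hp0 : (0:ℝ) < p := hpq.pos
  have hq0 : (0:ℝ) < q := hpq.symm.pos
  set A := (∫⁻ x, f x ^ p ∂μ) ^ (1/p) with hAdef
  set B := (∫⁻ x, g x ^ q ∂μ) ^ (1/q) with hBdef
  by_cases hA0 : A = 0
  · have h1 : ∫⁻ x, f x ^ p ∂μ = 0 := by
      rcases ENNReal.rpow_eq_zero_iff.mp hA0 with ⟨h, _⟩ | ⟨h, hlt⟩
      · exact h
      · exfalso
        have : (0:ℝ) < 1/p := by positivity
        linarith
    have h2 : ∀ᵐ x ∂μ, f x ^ p = 0 := (lintegral_eq_zero_iff' (hf.pow_const p)).mp h1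
    have h3 : ∀ᵐ x ∂μ, f x * g x = 0 := by
      refine h2.mono fun x hx => ?_
      rcases ENNReal.rpow_eq_zero_iff.mp hx with ⟨h, _⟩ | ⟨_, hlt⟩
      · simp [h]
      · linarith
    calc ∫⁻ x, f x * g x ∂μ = ∫⁻ _, (0:ℝ≥0∞) ∂μ := lintegral_congr_ae h3
      _ ≤ A * B := by simp
  by_cases hBtop : B = ⊤
  · rw [hBtop, ENNReal.mul_top hA0]; exact le_top
  -- main case
  have hIAtop : (∫⁻ x, f x ^ p ∂μ) ≠ ⊤ := by
    intro h
    apply hftop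
    rw [hAdef, h, ENNReal.top_rpow_of_pos (one_div_pos.mpr hp0)]
  have hIA : (∫⁻ x, f x ^ p ∂μ) = A ^ p := (rpow_cancel hp0.ne' _).symm
  have hIB : (∫⁻ x, g x ^ q ∂μ) ≤ B ^ q := le_of_eq (rpow_cancel hq0.ne' _).symm
  have hApow : ∀ r : ℝ, A ^ r ≠ 0 ∧ A ^ r ≠ ⊤ := fun r =>
    ⟨by simp [ENNReal.rpow_eq_zero_iff, hA0, hftop], by simp [ENNReal.rpow_eq_top_iff, hA0, hftop]⟩
  have key : ∀ t : ℝ≥0∞, t ≠ 0 → t ≠ ⊤ →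
      ∫⁻ x, f x * g x ∂μ ≤
        t ^ p * (∫⁻ x, f x ^ p ∂μ) / ENNReal.ofReal p
          + t⁻¹ ^ q * (∫⁻ x, g x ^ q ∂μ) / ENNReal.ofReal q := by
    intro t ht0 httop
    have c1top : t ^ p / ENNReal.ofReal p ≠ ⊤ :=
      (ENNReal.div_lt_top (ENNReal.rpow_ne_top_of_nonneg hp0.le httop)
        (by simp [ENNReal.ofReal_eq_zero]; linarith)).ne
    have c2top : t⁻¹ ^ q / ENNReal.ofReal q ≠ ⊤ :=
      (ENNReal.div_lt_top (ENNReal.rpow_ne_top_of_nonneg hq0.le (by simp [ht0]))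
        (by simp [ENNReal.ofReal_eq_zero]; linarith)).ne
    have point : ∀ x, f x * g x ≤
        t ^ p / ENNReal.ofReal p * (f x ^ p) + t⁻¹ ^ q / ENNReal.ofReal q * (g x ^ q) := by
      intro x
      have h1 : f x * g x = (t * f x) * (t⁻¹ * g x) := by
        rw [mul_mul_mul_comm, ENNReal.mul_inv_cancel ht0 httop, one_mul]
      rw [h1]
      calc (t * f x) * (t⁻¹ * g x)
          ≤ (t * f x) ^ p / ENNReal.ofReal p + (t⁻¹ * g x) ^ q / ENNReal.ofReal q :=
            ENNReal.young_inequality _ _ hpq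
        _ = t ^ p / ENNReal.ofReal p * (f x ^ p) + t⁻¹ ^ q / ENNReal.ofReal q * (g x ^ q) := by
            rw [ENNReal.mul_rpow_of_nonneg _ _ hp0.le, ENNReal.mul_rpow_of_nonneg _ _ hq0.le]
            rw [ENNReal.div_eq_inv_mul, ENNReal.div_eq_inv_mul, ENNReal.div_eq_inv_mul,
              ENNReal.div_eq_inv_mul]
            ring
    calc ∫⁻ x, f x * g x ∂μ
        ≤ ∫⁻ x, (t ^ p / ENNReal.ofReal p * (f x ^ p)
            + t⁻¹ ^ q / ENNReal.ofReal q * (g x ^ q)) ∂μ := lintegral_mono point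
      _ = ∫⁻ x, t ^ p / ENNReal.ofReal p * (f x ^ p) ∂μ
            + ∫⁻ x, t⁻¹ ^ q / ENNReal.ofReal q * (g x ^ q) ∂μ :=
          lintegral_add_left' ((hf.pow_const p).const_mul _) _
      _ = t ^ p / ENNReal.ofReal p * ∫⁻ x, f x ^ p ∂μ
            + t⁻¹ ^ q / ENNReal.ofReal q * ∫⁻ x, g x ^ q ∂μ := by
          rw [lintegral_const_mul' _ _ c1top, lintegral_const_mul' _ _ c2top]
      _ = t ^ p * (∫⁻ x, f x ^ p ∂μ) / ENNReal.ofReal p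
            + t⁻¹ ^ q * (∫⁻ x, g x ^ q ∂μ) / ENNReal.ofReal q := by
          rw [ENNReal.div_eq_inv_mul, ENNReal.div_eq_inv_mul, ENNReal.div_eq_inv_mul,
            ENNReal.div_eq_inv_mul]
          ring
  -- now optimize over t
  refine ENNReal.le_of_forall_pos_le_add fun ε hε _ => ?_
  set δ : ℝ≥0∞ := (ε : ℝ≥0∞) / A with hδdef
  have hε' : (ε : ℝ≥0∞) ≠ 0 := by exact_mod_cast hε.ne'
  have hδ0 : δ ≠ 0 := by
    rw [hδdef]
    simp only [Ne, ENNReal.div_eq_zero_iff, not_or]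
    exact ⟨hε', hftop⟩
  have hδtop : δ ≠ ⊤ := (ENNReal.div_lt_top ENNReal.coe_ne_top hA0).ne
  set B' := B + δ with hB'def
  have hB'0 : B' ≠ 0 := by simp [hB'def, hδ0]
  have hB'top : B' ≠ ⊤ := by simp [hB'def, ENNReal.add_eq_top, hBtop, hδtop]
  set c := B' * A ^ (1 - p) with hcdef
  have hc0 : c ≠ 0 := mul_ne_zero hB'0 (hApow _).1
  have hctop : c ≠ ⊤ := ENNReal.mul_ne_top hB'top (hApow _).2
  set t := c ^ (1/p) with htdef
  have ht0 : t ≠ 0 := by simp [htdef, ENNReal.rpow_eq_zero_iff, hc0, hctop]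
  have httop : t ≠ ⊤ := by simp [htdef, ENNReal.rpow_eq_top_iff, hc0, hctop]
  have htp : t ^ p = c := rpow_cancel hp0.ne' _
  have hterm1 : t ^ p * (∫⁻ x, f x ^ p ∂μ) = A * B' := by
    rw [htp, hIA, hcdef, mul_assoc, ← ENNReal.rpow_add _ _ hA0 hftop]
    rw [show (1:ℝ) - p + p = 1 by ring, ENNReal.rpow_one, mul_comm]
  have hmul : p * q = p + q := hpq.mul_eq_add
  have hqp : -(1/p) * q = 1 - q := by
    have h := hpq.symm.div_conj_eq_sub_one
    rw [neg_mul, show (1/p) * q = q / p by ring, h]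
    ring
  have htq : t⁻¹ ^ q = B' ^ (1 - q) * A := by
    rw [htdef, ← ENNReal.rpow_neg, ← ENNReal.rpow_mul, hqp, hcdef,
      ENNReal.mul_rpow_of_ne_zero hB'0 (hApow _).1, ← ENNReal.rpow_mul]
    rw [show (1 - p) * (1 - q) = 1 by nlinarith [hmul], ENNReal.rpow_one]
  have hterm2 : t⁻¹ ^ q * (∫⁻ x, g x ^ q ∂μ) ≤ A * B' := by
    calc t⁻¹ ^ q * (∫⁻ x, g x ^ q ∂μ) ≤ t⁻¹ ^ q * B' ^ q := by
          refine mul_le_mul_right (hIB.trans ?_) _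
          exact ENNReal.rpow_le_rpow (by simp [hB'def]) hq0.le
      _ = A * B' := by
          rw [htq, mul_right_comm, ← ENNReal.rpow_add _ _ hB'0 hB'top,
            show (1:ℝ) - q + q = 1 by ring, ENNReal.rpow_one, mul_comm]
  have hsum : ∀ X : ℝ≥0∞, X / ENNReal.ofReal p + X / ENNReal.ofReal q = X := by
    intro X
    rw [ENNReal.div_eq_inv_mul, ENNReal.div_eq_inv_mul, ← add_mul]
    have : (ENNReal.ofReal p)⁻¹ + (ENNReal.ofReal q)⁻¹ = 1 := by
      rw [← ENNReal.ofReal_inv_of_pos hp0, ← ENNReal.ofReal_inv_of_pos hq0,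
        ← ENNReal.ofReal_add (by positivity) (by positivity), hpq.inv_add_inv_eq_one,
        ENNReal.ofReal_one]
    rw [this, one_mul]
  calc ∫⁻ x, f x * g x ∂μ
      ≤ t ^ p * (∫⁻ x, f x ^ p ∂μ) / ENNReal.ofReal p
          + t⁻¹ ^ q * (∫⁻ x, g x ^ q ∂μ) / ENNReal.ofReal q := key t ht0 httop
    _ ≤ A * B' / ENNReal.ofReal p + A * B' / ENNReal.ofReal q :=
        add_le_add (ENNReal.div_le_div_right (le_of_eq hterm1) _)
          (ENNReal.div_le_div_right hterm2 _)
    _ = A * B' := hsum _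
    _ = A * B + ε := by
        rw [hB'def, mul_add, hδdef, ENNReal.mul_div_cancel hA0 hftop]


variable {d : ℕ}

lemma intVec_apply (k : Fin d → ℤ) (i : Fin d) : intVec k i = (k i : ℝ) := rfl

lemma intVec_add (k m : Fin d → ℤ) : intVec (k + m) = intVec k + intVec m := by
  ext i
  show ((k i + m i : ℤ) : ℝ) = (k i : ℝ) + (m i : ℝ)
  push_cast; ring

lemma intVec_sub (k m : Fin d → ℤ) : intVec (k - m) = intVec k - intVec m := by
  ext i
  show ((k i - m i : ℤ) : ℝ) = (k i : ℝ) - (m i : ℝ)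
  push_cast; ring

lemma continuous_coord (i : Fin d) : Continuous fun x : Rd d => x i := by
  fun_prop

lemma isClosed_unitCube : IsClosed (unitCube d) := by
  have h : unitCube d = ⋂ i, {x : Rd d | |x i| ≤ 1/2} := by
    ext x; simp [unitCube, Set.mem_iInter]
  rw [h]
  exact isClosed_iInter fun i =>
    isClosed_le ((continuous_coord i).abs) continuous_const

lemma isOpen_openCube (r : ℝ) : IsOpen (openCube d r) := by
  have h : openCube d r = ⋂ i, {x : Rd d | |x i| < r} := by
    ext x; simp [openCube, Set.mem_iInter]
  rw [h]
  exact isOpen_iInter_of_finite fun i =>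
    isOpen_lt ((continuous_coord i).abs) continuous_const

lemma hyperplane_null (i : Fin d) (c : ℝ) : volume {x : Rd d | x i = c} = 0 := by
  have hmp := EuclideanSpace.volume_preserving_symm_measurableEquiv_toLp (Fin d)
  have hms : MeasurableSet {y : Fin d → ℝ | y i = c} := by
    have : {y : Fin d → ℝ | y i = c} = (fun y : Fin d → ℝ => y i) ⁻¹' {c} := rfl
    rw [this]
    exact (measurable_pi_apply i) (measurableSet_singleton c)
  have hset : {x : Rd d | x i = c}
      = (MeasurableEquiv.toLp 2 (Fin d → ℝ)).symm ⁻¹' {y : Fin d → ℝ | y i = c} := rfl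
  rw [hset, hmp.measure_preimage hms.nullMeasurableSet, volume_pi]
  exact Measure.pi_hyperplane (fun _ : Fin d => (volume : Measure ℝ)) i c

lemma cube_ae : unitCube d =ᵐ[volume] openCube d (1/2) := by
  have hsub : openCube d (1/2) ⊆ unitCube d := fun x hx i => (hx i).le
  have hdiff : unitCube d \ openCube d (1/2) ⊆
      ⋃ i : Fin d, ({x : Rd d | x i = 1/2} ∪ {x : Rd d | x i = -(1/2)}) := by
    rintro x ⟨hx1, hx2⟩
    simp only [openCube, Set.mem_setOf_eq, not_forall, not_lt] at hx2
    obtain ⟨i, hi⟩ := hx2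
    have : |x i| = 1/2 := le_antisymm (hx1 i) hi
    rcases abs_eq (by norm_num : (0:ℝ) ≤ 1/2) |>.mp this with h | h
    · exact Set.mem_iUnion.mpr ⟨i, Or.inl h⟩
    · exact Set.mem_iUnion.mpr ⟨i, Or.inr h⟩
  have hnull : volume (unitCube d \ openCube d (1/2)) = 0 := by
    refine measure_mono_null hdiff (measure_iUnion_null fun i => measure_union_null ?_ ?_)
    · exact hyperplane_null i _
    · exact hyperplane_null i _
  refine MeasureTheory.ae_eq_set.mpr ⟨hnull, ?_⟩
  rw [Set.diff_eq_empty.mpr hsub]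
  simp

lemma shift_integral (A : Set (Rd d)) (c : Rd d) (h : Rd d → ℝ≥0∞) :
    ∫⁻ x in A, h (x + c) = ∫⁻ y in (fun x => x + c) '' A, h y :=
  (measurePreserving_add_right volume c).setLIntegral_comp_emb
    (measurableEmbedding_addRight c) h A

lemma cover_lemma (h : Rd d → ℝ≥0∞) :
    ∫⁻ x, h x ≤ ∑' m : Fin d → ℤ, ∫⁻ x in unitCube d, h (x + intVec m) := by
  have cover : (Set.univ : Set (Rd d)) ⊆
      ⋃ m : Fin d → ℤ, (fun x => x + intVec m) '' unitCube d := by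
    intro x _
    refine Set.mem_iUnion.mpr ⟨fun i => ⌊x i + 1/2⌋, ?_⟩
    refine ⟨x - intVec fun i => ⌊x i + 1/2⌋, fun i => ?_, sub_add_cancel x _⟩
    have h1 := Int.floor_le (x i + 1/2)
    have h2 := Int.lt_floor_add_one (x i + 1/2)
    have hco : (x - intVec fun j => ⌊x j + 1/2⌋) i = x i - (⌊x i + 1/2⌋ : ℝ) := rfl
    rw [hco, abs_le]
    constructor <;> [linarith; linarith]
  calc ∫⁻ x, h x = ∫⁻ x in Set.univ, h x := (setLIntegral_univ h).symm
    _ ≤ ∫⁻ x in ⋃ m : Fin d → ℤ, (fun x => x + intVec m) '' unitCube d, h x :=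
        lintegral_mono' (Measure.restrict_mono cover le_rfl) le_rfl
    _ ≤ ∑' m : Fin d → ℤ, ∫⁻ x in (fun x => x + intVec m) '' unitCube d, h x :=
        lintegral_iUnion_le _ _
    _ = ∑' m : Fin d → ℤ, ∫⁻ x in unitCube d, h (x + intVec m) :=
        tsum_congr fun m => (shift_integral _ _ _).symm

lemma disj_lemma (u : Rd d → ℝ≥0∞) :
    ∑' m : Fin d → ℤ, ∫⁻ x in unitCube d, u (x + intVec m) ≤ ∫⁻ x, u x := by
  set S : (Fin d → ℤ) → Set (Rd d) := fun m => (fun x => x + intVec m) '' openCube d (1/2)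
    with hSdef
  have hSmeas : ∀ m, MeasurableSet (S m) := fun m =>
    (((Homeomorph.addRight (intVec m)).isOpen_image).mpr (isOpen_openCube _)).measurableSet
  have hdisj : Pairwise (Function.onFun Disjoint S) := by
    intro m m' hne
    rw [Function.onFun, Set.disjoint_left]
    rintro z ⟨y, hy, rfl⟩ ⟨y', hy', hxy⟩
    apply hne
    funext i
    have hc : y' i + (m' i : ℝ) = y i + (m i : ℝ) := congrArg (fun z : Rd d => z i) hxy
    have h1 : |y i| < 1/2 := hy i
    have h2 : |y' i| < 1/2 := hy' i
    have hcast : ((m i - m' i : ℤ) : ℝ) = y' i - y i := by push_cast; linarith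
    have habs : |((m i - m' i : ℤ) : ℝ)| < 1 := by
      rw [hcast]
      calc |y' i - y i| ≤ |y' i| + |y i| := abs_sub _ _
        _ < 1 := by linarith
    rw [← Int.cast_abs] at habs
    have hint : |m i - m' i| < 1 := by exact_mod_cast habs
    have := Int.abs_lt_one_iff.mp hint
    omega
  have hle : Measure.sum (fun m : Fin d → ℤ => volume.restrict (S m)) ≤ volume := by
    refine Measure.le_iff.mpr fun E hE => ?_
    rw [Measure.sum_apply _ hE]
    calc ∑' m : Fin d → ℤ, (volume.restrict (S m)) E
        = ∑' m : Fin d → ℤ, volume (E ∩ S m) := by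
          refine tsum_congr fun m => ?_
          rw [Measure.restrict_apply hE]
      _ = volume (⋃ m : Fin d → ℤ, E ∩ S m) := by
          refine (measure_iUnion ?_ fun m => hE.inter (hSmeas m)).symm
          exact fun m m' hne => ((hdisj hne).mono Set.inter_subset_right Set.inter_subset_right)
      _ ≤ volume E := measure_mono (Set.iUnion_subset fun m => Set.inter_subset_left)
  calc ∑' m : Fin d → ℤ, ∫⁻ x in unitCube d, u (x + intVec m)
      = ∑' m : Fin d → ℤ, ∫⁻ x in S m, u x := by
        refine tsum_congr fun m => ?_
        rw [Measure.restrict_congr_set cube_ae, hSdef, shift_integral]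
    _ = ∫⁻ x, u x ∂(Measure.sum fun m : Fin d → ℤ => volume.restrict (S m)) :=
        (lintegral_sum_measure u _).symm
    _ ≤ ∫⁻ x, u x ∂volume := lintegral_mono' hle le_rfl

lemma ae_translate {P : Rd d → Prop} (c : Rd d) (h : ∀ᵐ x, P x) : ∀ᵐ x, P (x + c) := by
  obtain ⟨N, hsub, hNmeas, hN0⟩ := exists_measurable_superset_of_null (ae_iff.mp h)
  rw [ae_iff]
  have hpre : volume ((fun x => x + c) ⁻¹' N) = 0 := by
    rw [(measurePreserving_add_right volume c).measure_preimage hNmeas.nullMeasurableSet]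
    exact hN0
  exact measure_mono_null (fun x hx => @hsub (x + c) hx) hpre

lemma aemeas_translate {g : Rd d → ℝ≥0∞} (hg : AEMeasurable g volume) (c : Rd d) :
    AEMeasurable (fun x => g (x + c)) volume :=
  hg.comp_quasiMeasurePreserving (measurePreserving_add_right volume c).quasiMeasurePreserving


end S7Aux
end
/-- boundedness of analysis with integer translates,
`(∑_k |⟨f, φ_{0k}⟩/w(k)|^p)^{1/p} ≤ ‖φ‖_{𝓛_{q,w*}} ‖f‖_{p,1/w}`. -/
theorem statement7 {d : ℕ} (p q : ℝ≥0∞) (hp : 1 ≤ p) (hpq : 1 / p + 1 / q = 1)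
    (α : ℝ) (hα : 0 < α) (w wstar : Rd d → ℝ) (cw : ℝ) (hw : IsWeight α w wstar cw)
    (f : Rd d → ℂ) (hf : MemWLp p (invW w) f)
    (φ : Rd d → ℂ) (hφ : MemLL q wstar φ) :
    seqNorm p (invW w) (fun k => innerProd f (transl φ k)) ≤
      LLnorm q wstar φ * wNorm p (invW w) f := by
  classical
  have hwpos : ∀ x, 0 < w x := fun x => lt_of_lt_of_le one_pos (hw.one_le x)
  set g : Rd d → ℝ≥0∞ := fun x => (‖invW w x‖₊ : ℝ≥0∞) * (‖f x‖₊ : ℝ≥0∞) with hgdef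
  set Φ : Rd d → ℝ≥0∞ := fun y => (‖φ y‖₊ : ℝ≥0∞) * (‖wstar y‖₊ : ℝ≥0∞) with hΦdef
  have hper : ∀ x, perSum wstar φ x = ∑' k : Fin d → ℤ, Φ (x + intVec k) := fun x => rfl
  have hg_meas : AEMeasurable g volume := by
    have h1 : Continuous (invW w) := hw.continuous.inv₀ fun x => (hwpos x).ne'
    exact ((h1.measurable.nnnorm.coe_nnreal_ennreal).aemeasurable).mul hf.1.aemeasurable.nnnorm.coe_nnreal_ennreal
  have hgnn : ∀ x, ((‖(invW w x : ℂ) * f x‖₊ : ℝ≥0∞)) = g x := by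
    intro x
    rw [nnnorm_mul, ENNReal.coe_mul, Complex.nnnorm_real]
  have hreindexΦ : ∀ (x : Rd d) (j : Fin d → ℤ),
      (∑' m : Fin d → ℤ, Φ (x + intVec m + intVec j)) = ∑' m : Fin d → ℤ, Φ (x + intVec m) := by
    intro x j
    calc ∑' m : Fin d → ℤ, Φ (x + intVec m + intVec j)
        = ∑' m : Fin d → ℤ, Φ (x + intVec (m + j)) := by
          refine tsum_congr fun m => ?_
          rw [S7Aux.intVec_add, ← add_assoc]
      _ = ∑' m : Fin d → ℤ, Φ (x + intVec m) := (Equiv.addRight j).tsum_eq fun n => Φ (x + intVec n)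
  -- Step 1 : kernel bound for a single coefficient
  have key1 : ∀ k : Fin d → ℤ,
      (‖innerProd f (transl φ k)‖₊ : ℝ≥0∞) * (‖invW w (intVec k)‖₊ : ℝ≥0∞)
        ≤ ∫⁻ x, g x * Φ (x + intVec k) := by
    intro k
    have hnorm : (‖innerProd f (transl φ k)‖₊ : ℝ≥0∞)
        ≤ ∫⁻ x, (‖f x‖₊ : ℝ≥0∞) * (‖φ (x + intVec k)‖₊ : ℝ≥0∞) := by
      simp only [innerProd, transl]
      refine (enorm_integral_le_lintegral_enorm _).trans (le_of_eq ?_)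
      refine lintegral_congr fun x => ?_
      rw [enorm_mul, RCLike.enorm_conj]; rfl
    have hkey : ∀ x : Rd d, (‖invW w (intVec k)‖₊ : ℝ≥0∞)
        ≤ (‖invW w x‖₊ : ℝ≥0∞) * (‖wstar (x + intVec k)‖₊ : ℝ≥0∞) := by
      intro x
      have hsub := hw.submult (x + intVec k) (-(intVec k))
      rw [add_neg_cancel_right, hw.even] at hsub
      have hreal : (w (intVec k))⁻¹ ≤ (w x)⁻¹ * wstar (x + intVec k) := by
        have hx0 : w x ≠ 0 := (hwpos x).ne'
        have hk0 : w (intVec k) ≠ 0 := (hwpos (intVec k)).ne'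
        have h1 : (w (intVec k))⁻¹ = (w x)⁻¹ * (w x / w (intVec k)) := by
          field_simp
        rw [h1]
        refine mul_le_mul_of_nonneg_left ?_ (inv_nonneg.mpr (hwpos x).le)
        rw [div_le_iff₀ (hwpos (intVec k))]
        exact hsub
      show (‖invW w (intVec k)‖₊ : ℝ≥0∞) ≤ (‖invW w x‖₊ : ℝ≥0∞) * (‖wstar (x + intVec k)‖₊ : ℝ≥0∞)
      rw [show invW w (intVec k) = (w (intVec k))⁻¹ from rfl,
        show invW w x = (w x)⁻¹ from rfl,
        ← enorm_eq_nnnorm, ← enorm_eq_nnnorm, ← enorm_eq_nnnorm,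
        Real.enorm_eq_ofReal (inv_nonneg.mpr (hwpos (intVec k)).le),
        Real.enorm_eq_ofReal (inv_nonneg.mpr (hwpos x).le),
        Real.enorm_eq_ofReal (hw.wstar_nonneg _),
        ← ENNReal.ofReal_mul (inv_nonneg.mpr (hwpos x).le)]
      exact ENNReal.ofReal_le_ofReal hreal
    calc (‖innerProd f (transl φ k)‖₊ : ℝ≥0∞) * (‖invW w (intVec k)‖₊ : ℝ≥0∞)
        ≤ (∫⁻ x, (‖f x‖₊ : ℝ≥0∞) * (‖φ (x + intVec k)‖₊ : ℝ≥0∞))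
            * (‖invW w (intVec k)‖₊ : ℝ≥0∞) := mul_le_mul_left hnorm _
      _ = ∫⁻ x, ((‖f x‖₊ : ℝ≥0∞) * (‖φ (x + intVec k)‖₊ : ℝ≥0∞))
            * (‖invW w (intVec k)‖₊ : ℝ≥0∞) :=
          (lintegral_mul_const' _ _ ENNReal.coe_ne_top).symm
      _ ≤ ∫⁻ x, g x * Φ (x + intVec k) := by
          refine lintegral_mono fun x => ?_
          calc (‖f x‖₊ : ℝ≥0∞) * (‖φ (x + intVec k)‖₊ : ℝ≥0∞) * (‖invW w (intVec k)‖₊ : ℝ≥0∞)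
              ≤ (‖f x‖₊ : ℝ≥0∞) * (‖φ (x + intVec k)‖₊ : ℝ≥0∞)
                  * ((‖invW w x‖₊ : ℝ≥0∞) * (‖wstar (x + intVec k)‖₊ : ℝ≥0∞)) :=
                mul_le_mul_right (hkey x) _
            _ = g x * Φ (x + intVec k) := by
                simp only [hgdef, hΦdef]
                ring
  -- Step 2 : periodization
  have key2 : ∀ k : Fin d → ℤ, (∫⁻ x, g x * Φ (x + intVec k))
      ≤ ∫⁻ x in unitCube d, ∑' m : Fin d → ℤ,
          g (x + intVec m) * Φ (x + intVec m + intVec k) := by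
    intro k
    refine (S7Aux.cover_lemma (fun x => g x * Φ (x + intVec k))).trans ?_
    exact S7Aux.tsum_lintegral_le _ _
  rcases eq_or_ne p ⊤ with rfl | hptop
  · -- case p = ∞, q = 1
    have hq1 : q = 1 := by
      rw [ENNReal.div_top, zero_add, one_div, ENNReal.inv_eq_one] at hpq
      exact hpq
    subst hq1
    have hwnorm : wNorm ⊤ (invW w) f = essSup g volume := by
      rw [wNorm, eLpNorm_exponent_top, eLpNormEssSup]
      exact essSup_congr_ae (Filter.Eventually.of_forall hgnn)
    have hC : essSup g volume ≠ ⊤ := by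
      have h := hf.2
      rw [hwnorm] at h
      exact h.ne
    have hLL : LLnorm 1 wstar φ = ∫⁻ x in unitCube d, perSum wstar φ x := by
      rw [LLnorm, if_neg (by simp : (1 : ℝ≥0∞) ≠ ⊤)]
      simp
    have hae : ∀ᵐ x ∂(volume.restrict (unitCube d)),
        ∀ m : Fin d → ℤ, g (x + intVec m) ≤ essSup g volume := by
      refine ae_restrict_of_ae ?_
      refine ae_all_iff.mpr fun m => ?_
      exact S7Aux.ae_translate (intVec m) (ENNReal.ae_le_essSup g)
    rw [seqNorm, if_pos rfl]
    refine iSup_le fun k => ?_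
    calc (‖innerProd f (transl φ k)‖₊ : ℝ≥0∞) * (‖invW w (intVec k)‖₊ : ℝ≥0∞)
        ≤ ∫⁻ x, g x * Φ (x + intVec k) := key1 k
      _ ≤ ∫⁻ x in unitCube d, ∑' m : Fin d → ℤ,
            g (x + intVec m) * Φ (x + intVec m + intVec k) := key2 k
      _ ≤ ∫⁻ x in unitCube d, essSup g volume * perSum wstar φ x := by
          refine lintegral_mono_ae (hae.mono fun x hx => ?_)
          calc ∑' m : Fin d → ℤ, g (x + intVec m) * Φ (x + intVec m + intVec k)
              ≤ ∑' m : Fin d → ℤ, essSup g volume * Φ (x + intVec m + intVec k) :=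
                ENNReal.tsum_le_tsum fun m => mul_le_mul_left (hx m) _
            _ = essSup g volume * ∑' m : Fin d → ℤ, Φ (x + intVec m + intVec k) :=
                ENNReal.tsum_mul_left
            _ = essSup g volume * perSum wstar φ x := by rw [hreindexΦ x k, ← hper x]
      _ = essSup g volume * ∫⁻ x in unitCube d, perSum wstar φ x :=
          lintegral_const_mul' _ _ hC
      _ = LLnorm 1 wstar φ * wNorm ⊤ (invW w) f := by rw [hLL, hwnorm, mul_comm]
  rcases eq_or_ne p 1 with rfl | hp1
  · -- case p = 1, q = ∞
    have hqtop : q = ⊤ := by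
      have h1 : (1 : ℝ≥0∞) + 1 / q = 1 + 0 := by
        rw [add_zero]
        rw [show (1 : ℝ≥0∞) / 1 = 1 by simp] at hpq
        exact hpq
      have h0 : 1 / q = 0 := (ENNReal.add_right_inj ENNReal.one_ne_top).mp h1
      rwa [one_div, ENNReal.inv_eq_zero] at h0
    subst hqtop
    have hwnorm : wNorm 1 (invW w) f = ∫⁻ x, g x := by
      rw [wNorm, eLpNorm_one_eq_lintegral_enorm]
      exact lintegral_congr hgnn
    have hLL : LLnorm ⊤ wstar φ
        = essSup (perSum wstar φ) (volume.restrict (unitCube d)) := by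
      rw [LLnorm, if_pos rfl]
    have hD : essSup (perSum wstar φ) (volume.restrict (unitCube d)) ≠ ⊤ := by
      have h := hφ.2
      rw [hLL] at h
      exact h.ne
    rw [seqNorm, if_neg ENNReal.one_ne_top]
    simp only [ENNReal.toReal_one, ENNReal.rpow_one, one_div_one]
    calc ∑' k : Fin d → ℤ,
          (‖innerProd f (transl φ k)‖₊ : ℝ≥0∞) * (‖invW w (intVec k)‖₊ : ℝ≥0∞)
        ≤ ∑' k : Fin d → ℤ, ∫⁻ x in unitCube d, ∑' m : Fin d → ℤ,
            g (x + intVec m) * Φ (x + intVec m + intVec k) :=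
          ENNReal.tsum_le_tsum fun k => (key1 k).trans (key2 k)
      _ ≤ ∫⁻ x in unitCube d, ∑' k : Fin d → ℤ, ∑' m : Fin d → ℤ,
            g (x + intVec m) * Φ (x + intVec m + intVec k) :=
          S7Aux.tsum_lintegral_le _ _
      _ = ∫⁻ x in unitCube d, (∑' m : Fin d → ℤ, g (x + intVec m)) * perSum wstar φ x := by
          refine lintegral_congr fun x => ?_
          calc ∑' k : Fin d → ℤ, ∑' m : Fin d → ℤ,
                g (x + intVec m) * Φ (x + intVec m + intVec k)
              = ∑' m : Fin d → ℤ, ∑' k : Fin d → ℤ,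
                g (x + intVec m) * Φ (x + intVec m + intVec k) := ENNReal.tsum_comm
            _ = ∑' m : Fin d → ℤ, g (x + intVec m) * perSum wstar φ x := by
                refine tsum_congr fun m => ?_
                rw [ENNReal.tsum_mul_left]
                congr 1
                calc ∑' k : Fin d → ℤ, Φ (x + intVec m + intVec k)
                    = ∑' k : Fin d → ℤ, Φ (x + intVec k + intVec m) :=
                      tsum_congr fun k => by rw [add_right_comm]
                  _ = ∑' k : Fin d → ℤ, Φ (x + intVec k) := hreindexΦ x m
                  _ = perSum wstar φ x := (hper x).symm
            _ = (∑' m : Fin d → ℤ, g (x + intVec m)) * perSum wstar φ x :=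
                ENNReal.tsum_mul_right
      _ ≤ ∫⁻ x in unitCube d, (∑' m : Fin d → ℤ, g (x + intVec m))
            * essSup (perSum wstar φ) (volume.restrict (unitCube d)) :=
          lintegral_mono_ae ((ENNReal.ae_le_essSup (perSum wstar φ)).mono
            fun x hx => mul_le_mul_right hx _)
      _ = (∫⁻ x in unitCube d, ∑' m : Fin d → ℤ, g (x + intVec m))
            * essSup (perSum wstar φ) (volume.restrict (unitCube d)) :=
          lintegral_mul_const' _ _ hD
      _ ≤ (∫⁻ x, g x) * essSup (perSum wstar φ) (volume.restrict (unitCube d)) := by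
          refine mul_le_mul_left ?_ _
          rw [lintegral_tsum fun m => (S7Aux.aemeas_translate hg_meas (intVec m)).restrict]
          exact S7Aux.disj_lemma g
      _ = LLnorm ⊤ wstar φ * wNorm 1 (invW w) f := by rw [hLL, hwnorm, mul_comm]
  · -- case 1 < p < ∞
    have hp1' : 1 < p := lt_of_le_of_ne hp (Ne.symm hp1)
    have hp0 : p ≠ 0 := (lt_of_lt_of_le zero_lt_one hp).ne'
    have hq0 : q ≠ 0 := by
      rintro rfl
      rw [ENNReal.div_zero one_ne_zero, add_top] at hpq
      exact ENNReal.top_ne_one hpq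
    have hqtop : q ≠ ⊤ := by
      rintro rfl
      rw [ENNReal.div_top, add_zero, one_div, ENNReal.inv_eq_one] at hpq
      exact hp1 hpq
    set pr := p.toReal with hprdef
    set qr := q.toReal with hqrdef
    have hpr1 : 1 < pr := by
      have h := (ENNReal.toReal_lt_toReal (by simp : (1 : ℝ≥0∞) ≠ ⊤) hptop).mpr hp1'
      simpa using h
    have hsum : pr⁻¹ + qr⁻¹ = 1 := by
      have h1 : p⁻¹ + q⁻¹ = 1 := by rw [← one_div, ← one_div]; exact hpq
      have h2 := congrArg ENNReal.toReal h1
      rwa [ENNReal.toReal_add (ENNReal.inv_ne_top.mpr hp0) (ENNReal.inv_ne_top.mpr hq0),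
        ENNReal.toReal_inv, ENNReal.toReal_inv, ENNReal.toReal_one] at h2
    have hpq_r : Real.HolderConjugate pr qr := Real.holderConjugate_iff.mpr ⟨hpr1, hsum⟩
    have hpr0 : (0 : ℝ) < pr := hpq_r.pos
    have hqr0 : (0 : ℝ) < qr := hpq_r.symm.pos
    set gp : Rd d → ℝ≥0∞ :=
      fun x => (∑' m : Fin d → ℤ, g (x + intVec m) ^ pr) ^ (1 / pr) with hgpdef
    have hgp_meas : AEMeasurable gp (volume.restrict (unitCube d)) := by
      refine AEMeasurable.restrict ?_
      refine ENNReal.continuous_rpow_const.measurable.comp_aemeasurable ?_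
      exact AEMeasurable.ennreal_tsum fun m =>
        ENNReal.continuous_rpow_const.measurable.comp_aemeasurable
          (S7Aux.aemeas_translate hg_meas (intVec m))
    have hwnorm : wNorm p (invW w) f = (∫⁻ x, g x ^ pr) ^ (1 / pr) := by
      rw [wNorm, eLpNorm_eq_lintegral_rpow_enorm_toReal hp0 hptop]
      congr 1
      exact lintegral_congr fun x => congrArg (· ^ pr) (hgnn x)
    have h7b : (∫⁻ x in unitCube d, gp x ^ pr) ^ (1 / pr) ≤ wNorm p (invW w) f := by
      rw [hwnorm]
      refine ENNReal.rpow_le_rpow ?_ (one_div_pos.mpr hpr0).le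
      calc ∫⁻ x in unitCube d, gp x ^ pr
          = ∫⁻ x in unitCube d, ∑' m : Fin d → ℤ, g (x + intVec m) ^ pr :=
            lintegral_congr fun x => S7Aux.rpow_cancel hpr0.ne' _
        _ = ∑' m : Fin d → ℤ, ∫⁻ x in unitCube d, g (x + intVec m) ^ pr :=
            lintegral_tsum fun m => (ENNReal.continuous_rpow_const.measurable.comp_aemeasurable
              (S7Aux.aemeas_translate hg_meas (intVec m))).restrict
        _ ≤ ∫⁻ x, g x ^ pr := S7Aux.disj_lemma fun y => g y ^ pr
    have hAne : (∫⁻ x in unitCube d, gp x ^ pr) ^ (1 / pr) ≠ ⊤ := (h7b.trans_lt hf.2).ne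
    have hLL : LLnorm q wstar φ
        = (∫⁻ x in unitCube d, perSum wstar φ x ^ qr) ^ (1 / qr) := by
      rw [LLnorm, if_neg hqtop]
    have step6 : ∀ x : Rd d,
        (∑' k : Fin d → ℤ, (∑' m : Fin d → ℤ,
            g (x + intVec m) * Φ (x + intVec m + intVec k)) ^ pr) ^ (1 / pr)
          ≤ gp x * perSum wstar φ x := by
      intro x
      have hrew : ∀ k : Fin d → ℤ,
          (∑' m : Fin d → ℤ, g (x + intVec m) * Φ (x + intVec m + intVec k))
            = ∑' n : Fin d → ℤ, Φ (x + intVec n) * g (x + intVec n - intVec k) := by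
        intro k
        calc ∑' m : Fin d → ℤ, g (x + intVec m) * Φ (x + intVec m + intVec k)
            = ∑' m : Fin d → ℤ,
                Φ (x + intVec (m + k)) * g (x + intVec (m + k) - intVec k) := by
              refine tsum_congr fun m => ?_
              rw [S7Aux.intVec_add, mul_comm]
              congr 2
              · abel
              · abel
          _ = ∑' n : Fin d → ℤ, Φ (x + intVec n) * g (x + intVec n - intVec k) :=
              (Equiv.addRight k).tsum_eq fun n => Φ (x + intVec n) * g (x + intVec n - intVec k)
      have hmink := S7Aux.minkowski_lintegral (Measure.count : Measure (Fin d → ℤ)) hpq_r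
        (fun k n => Φ (x + intVec n) * g (x + intVec n - intVec k))
      simp only [lintegral_count] at hmink
      have hn : ∀ n : Fin d → ℤ,
          (∑' k : Fin d → ℤ, (Φ (x + intVec n) * g (x + intVec n - intVec k)) ^ pr) ^ (1 / pr)
            = Φ (x + intVec n) * gp x := by
        intro n
        have h1 : ∀ k : Fin d → ℤ, (Φ (x + intVec n) * g (x + intVec n - intVec k)) ^ pr
            = Φ (x + intVec n) ^ pr * g (x + intVec n - intVec k) ^ pr := fun k =>
          ENNReal.mul_rpow_of_nonneg _ _ hpr0.le
        rw [tsum_congr h1, ENNReal.tsum_mul_left,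
          ENNReal.mul_rpow_of_nonneg _ _ (one_div_pos.mpr hpr0).le,
          S7Aux.rpow_cancel' hpr0.ne']
        congr 2
        calc ∑' k : Fin d → ℤ, g (x + intVec n - intVec k) ^ pr
            = ∑' k : Fin d → ℤ, g (x + intVec (n - k)) ^ pr := by
              refine tsum_congr fun k => ?_
              rw [S7Aux.intVec_sub]
              congr 2
              abel
          _ = ∑' k : Fin d → ℤ, g (x + intVec k) ^ pr :=
              (Equiv.subLeft n).tsum_eq fun k => g (x + intVec k) ^ pr
      calc (∑' k : Fin d → ℤ, (∑' m : Fin d → ℤ,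
              g (x + intVec m) * Φ (x + intVec m + intVec k)) ^ pr) ^ (1 / pr)
          = (∑' k : Fin d → ℤ, (∑' n : Fin d → ℤ,
              Φ (x + intVec n) * g (x + intVec n - intVec k)) ^ pr) ^ (1 / pr) := by
            congr 1
            exact tsum_congr fun k => by rw [hrew k]
        _ ≤ ∑' n : Fin d → ℤ, (∑' k : Fin d → ℤ,
              (Φ (x + intVec n) * g (x + intVec n - intVec k)) ^ pr) ^ (1 / pr) := hmink
        _ = ∑' n : Fin d → ℤ, Φ (x + intVec n) * gp x := tsum_congr hn
        _ = (∑' n : Fin d → ℤ, Φ (x + intVec n)) * gp x := ENNReal.tsum_mul_right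
        _ = gp x * perSum wstar φ x := by rw [← hper x, mul_comm]
    rw [seqNorm, if_neg hptop, ← hprdef]
    calc (∑' k : Fin d → ℤ, ((‖innerProd f (transl φ k)‖₊ : ℝ≥0∞)
            * (‖invW w (intVec k)‖₊ : ℝ≥0∞)) ^ pr) ^ (1 / pr)
        ≤ (∑' k : Fin d → ℤ, (∫⁻ x in unitCube d, ∑' m : Fin d → ℤ,
            g (x + intVec m) * Φ (x + intVec m + intVec k)) ^ pr) ^ (1 / pr) := by
          refine ENNReal.rpow_le_rpow (ENNReal.tsum_le_tsum fun k => ?_)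
            (one_div_pos.mpr hpr0).le
          exact ENNReal.rpow_le_rpow ((key1 k).trans (key2 k)) hpr0.le
      _ ≤ ∫⁻ x in unitCube d, (∑' k : Fin d → ℤ, (∑' m : Fin d → ℤ,
            g (x + intVec m) * Φ (x + intVec m + intVec k)) ^ pr) ^ (1 / pr) :=
          S7Aux.minkowski_lintegral _ hpq_r _
      _ ≤ ∫⁻ x in unitCube d, gp x * perSum wstar φ x := lintegral_mono step6
      _ ≤ (∫⁻ x in unitCube d, gp x ^ pr) ^ (1 / pr)
            * (∫⁻ x in unitCube d, perSum wstar φ x ^ qr) ^ (1 / qr) :=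
          S7Aux.lintegral_mul_le_one_sided _ hpq_r _ hgp_meas hAne
      _ ≤ wNorm p (invW w) f * LLnorm q wstar φ := by
          rw [hLL]
          exact mul_le_mul_left h7b _
      _ = LLnorm q wstar φ * wNorm p (invW w) f := mul_comm _ _
end

section
/- Let 1 ≤ p ≤ ∞, 1/p + 1/q = 1, and let w be a weight of class 𝒲^α for some α > 0. If φ ∈ 𝓛_{p,w*} and φ̃ ∈ 𝓛_{q,w*}, then for every f ∈ L_{p,1/w}(ℝ^d), ‖Σ_{k∈ℤ^d} ⟨f, φ̃_{0k}⟩ φ_{0k}‖_{p,1/w} ≤ ‖φ‖_{𝓛_{p,w*}} · ‖φ̃‖_{𝓛_{q,w*}} · ‖f‖_{p,1/w}. -/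
open MeasureTheory Filter Finset Metric Set Complex
open scoped ENNReal NNReal Topology BigOperators FourierTransform RealInnerProductSpace

noncomputable section S8Aux
namespace S8Aux
open MeasureTheory Filter Finset Metric Set Complex
open scoped ENNReal NNReal Topology

variable {d : ℕ}

lemma intVec_add (j k : Fin d → ℤ) : intVec (j + k) = intVec j + intVec k := by
  ext i; show ((j i + k i : ℤ) : ℝ) = (j i : ℝ) + (k i : ℝ); push_cast; ring

/-- The half-open unit cube. -/
def cube (d : ℕ) : Set (Rd d) := {x | ∀ i, x i ∈ Set.Ico (-(1/2) : ℝ) (1/2)}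

lemma measurableSet_cube : MeasurableSet (cube d) := by
  have : cube d = ⋂ i, (fun x : Rd d => x i) ⁻¹' (Set.Ico (-(1/2) : ℝ) (1/2)) := by
    ext x; simp [cube]
  rw [this]
  exact MeasurableSet.iInter fun i =>
    ((measurable_pi_apply i).comp (MeasurableEquiv.toLp 2 (Fin d → ℝ)).symm.measurable)
      measurableSet_Ico

lemma cube_subset_unitCube : cube d ⊆ unitCube d := by
  intro x hx i
  have h := hx i
  rw [abs_le]
  exact ⟨h.1, h.2.le⟩

lemma exists_sub_intVec_mem_cube (x : Rd d) : ∃ k : Fin d → ℤ, x - intVec k ∈ cube d := by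
  refine ⟨fun i => ⌊x i + 1/2⌋, fun i => ?_⟩
  have h1 := Int.floor_le (x i + 1/2)
  have h2 := Int.lt_floor_add_one (x i + 1/2)
  constructor
  · show -(1/2) ≤ x i - (⌊x i + 1/2⌋ : ℝ); linarith
  · show x i - (⌊x i + 1/2⌋ : ℝ) < 1/2; linarith

/-- Splitting a Lebesgue integral over `ℝ^d` into integer translates of the cube. -/
lemma lintegral_eq_tsum_cube (h : Rd d → ℝ≥0∞) :
    ∫⁻ x, h x = ∑' k : Fin d → ℤ, ∫⁻ u in cube d, h (u + intVec k) := by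
  set S : (Fin d → ℤ) → Set (Rd d) := fun k => (fun x : Rd d => x - intVec k) ⁻¹' cube d
    with hS
  have hSdef : ∀ k : Fin d → ℤ, ((fun u : Rd d => u + intVec k) '' cube d) = S k := by
    intro k; ext x
    simp only [hS, Set.mem_image, Set.mem_preimage]
    constructor
    · rintro ⟨u, hu, rfl⟩
      have : u + intVec k - intVec k = u := by abel
      rwa [this]
    · intro hx; exact ⟨x - intVec k, hx, by abel⟩
  have hmeas : ∀ k, MeasurableSet (S k) :=
    fun k => (measurable_id.sub_const _) measurableSet_cube
  have hdisj : Pairwise (Function.onFun Disjoint S) := by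
    intro j k hjk
    rw [Function.onFun, Set.disjoint_left]
    intro x hxj hxk
    apply hjk
    funext i
    have h1 : -(1/2) ≤ x i - (j i : ℝ) ∧ x i - (j i : ℝ) < 1/2 := hxj i
    have h2 : -(1/2) ≤ x i - (k i : ℝ) ∧ x i - (k i : ℝ) < 1/2 := hxk i
    have habs : |((j i - k i : ℤ) : ℝ)| < 1 := by
      push_cast
      rw [abs_sub_lt_iff]
      constructor <;> [linarith [h1.1, h1.2, h2.1, h2.2]; linarith [h1.1, h1.2, h2.1, h2.2]]
    have : |(j i - k i : ℤ)| < 1 := by exact_mod_cast habs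
    have := Int.abs_lt_one_iff.1 this
    omega
  have hcover : (⋃ k, S k) = Set.univ := by
    rw [Set.eq_univ_iff_forall]
    intro x
    obtain ⟨k, hk⟩ := exists_sub_intVec_mem_cube x
    exact Set.mem_iUnion.2 ⟨k, hk⟩
  calc ∫⁻ x, h x = ∫⁻ x in ⋃ k, S k, h x := by rw [hcover, setLIntegral_univ]
    _ = ∑' k, ∫⁻ x in S k, h x := lintegral_iUnion hmeas hdisj h
    _ = ∑' k, ∫⁻ u in cube d, h (u + intVec k) := by
        refine tsum_congr fun k => ?_
        rw [← hSdef k]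
        exact ((measurePreserving_add_right volume (intVec k)).setLIntegral_comp_emb
          (MeasurableEquiv.addRight (intVec k)).measurableEmbedding h (cube d)).symm

/-- The periodization of an `ℝ≥0∞`-valued function. -/
def per (Ψ : Rd d → ℝ≥0∞) (x : Rd d) : ℝ≥0∞ := ∑' k : Fin d → ℤ, Ψ (x + intVec k)

lemma aemeas_comp_add {Ψ : Rd d → ℝ≥0∞} (hΨ : AEMeasurable Ψ volume) (c : Rd d) :
    AEMeasurable (fun x : Rd d => Ψ (x + c)) volume := by
  have h := (aestronglyMeasurable_iff_aemeasurable.2 hΨ).comp_measurePreserving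
    (measurePreserving_add_right volume c)
  exact aestronglyMeasurable_iff_aemeasurable.1 h

lemma aemeas_per {Ψ : Rd d → ℝ≥0∞} (hΨ : AEMeasurable Ψ volume) :
    AEMeasurable (per Ψ) volume :=
  AEMeasurable.ennreal_tsum fun k => aemeas_comp_add hΨ _

lemma per_add_intVec (Ψ : Rd d → ℝ≥0∞) (x : Rd d) (j : Fin d → ℤ) :
    per Ψ (x + intVec j) = per Ψ x := by
  unfold per
  calc ∑' k : Fin d → ℤ, Ψ (x + intVec j + intVec k)
      = ∑' k : Fin d → ℤ, Ψ (x + intVec (j + k)) := by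
        refine tsum_congr fun k => ?_
        rw [intVec_add, add_assoc]
    _ = ∑' k : Fin d → ℤ, Ψ (x + intVec k) :=
        (Equiv.addLeft j).tsum_eq fun m => Ψ (x + intVec m)

lemma lintegral_comp_add (Ψ : Rd d → ℝ≥0∞) (c : Rd d) :
    ∫⁻ x, Ψ (x + c) = ∫⁻ x, Ψ x :=
  (measurePreserving_add_right volume c).lintegral_comp_emb
    (MeasurableEquiv.addRight c).measurableEmbedding Ψ

lemma lintegral_eq_cube_per {Ψ : Rd d → ℝ≥0∞} (hΨ : AEMeasurable Ψ volume) :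
    ∫⁻ x, Ψ x = ∫⁻ u in cube d, per Ψ u := by
  rw [lintegral_eq_tsum_cube Ψ,
    ← lintegral_tsum fun k => (aemeas_comp_add hΨ (intVec k)).restrict]
  rfl

/-- A periodic a.e. bound on the cube extends to a global a.e. bound. -/
lemma ae_le_of_periodic {g : Rd d → ℝ≥0∞} (hper : ∀ x k, g (x + intVec k) = g x)
    {B : ℝ≥0∞} (hB : ∀ᵐ u ∂(volume.restrict (cube d)), g u ≤ B) :
    ∀ᵐ x : Rd d, g x ≤ B := by
  rw [ae_iff] at hB ⊢
  set T := {x : Rd d | ¬ g x ≤ B} with hT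
  have hTC : volume (T ∩ cube d) = 0 := by
    rwa [Measure.restrict_apply' measurableSet_cube] at hB
  have hsub : T ⊆ ⋃ k : Fin d → ℤ, (fun x : Rd d => x - intVec k) ⁻¹' (T ∩ cube d) := by
    intro x hx
    obtain ⟨k, hk⟩ := exists_sub_intVec_mem_cube x
    refine Set.mem_iUnion.2 ⟨k, ⟨?_, hk⟩⟩
    have he : (x - intVec k) + intVec k = x := by abel
    have hgg : g (x - intVec k) = g x := by rw [← hper (x - intVec k) k, he]
    simp only [hT, Set.mem_setOf_eq] at hx ⊢
    rwa [hgg]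
  refine measure_mono_null hsub (measure_iUnion_null fun k => ?_)
  have hmp : MeasurePreserving (fun x : Rd d => x - intVec k) volume volume := by
    have : (fun x : Rd d => x - intVec k) = fun x : Rd d => x + (-intVec k) := by
      funext x; abel
    rw [this]
    exact measurePreserving_add_right volume _
  exact hmp.quasiMeasurePreserving.preimage_null hTC

lemma ae_per_le_essSup {Ψ : Rd d → ℝ≥0∞} :
    ∀ᵐ x : Rd d, per Ψ x ≤ essSup (per Ψ) (volume.restrict (cube d)) :=
  ae_le_of_periodic (per_add_intVec Ψ) (ae_le_essSup (isBoundedUnder_of ⟨⊤, fun _ => le_top⟩))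

end S8Aux
end S8Aux
noncomputable section S8Aux2
namespace S8Aux
open MeasureTheory Filter Finset Metric Set Complex
open scoped ENNReal NNReal Topology

variable {d : ℕ}

lemma ennnorm_mono_of_nonneg {a b : ℝ} (h0 : 0 ≤ a) (h : a ≤ b) :
    (‖a‖₊ : ℝ≥0∞) ≤ (‖b‖₊ : ℝ≥0∞) := by
  refine ENNReal.coe_le_coe.2 ?_
  rw [← NNReal.coe_le_coe, coe_nnnorm, coe_nnnorm, Real.norm_eq_abs, Real.norm_eq_abs,
    _root_.abs_of_nonneg h0, _root_.abs_of_nonneg (h0.trans h)]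
  exact h

lemma enorm_tsum_le {ι : Type*} [Countable ι] (f : ι → ℂ) :
    (‖∑' k, f k‖₊ : ℝ≥0∞) ≤ ∑' k, (‖f k‖₊ : ℝ≥0∞) := by
  by_cases h : (∑' k, (‖f k‖₊ : ℝ≥0∞)) = ⊤
  · simp [h]
  · have hs : Summable fun k => ‖f k‖₊ := ENNReal.tsum_coe_ne_top_iff_summable.1 h
    have hs' : Summable fun k => ‖f k‖ := by
      have := NNReal.summable_coe.2 hs
      simpa [coe_nnnorm] using this
    rw [← ENNReal.coe_tsum hs]
    refine ENNReal.coe_le_coe.2 ?_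
    rw [← NNReal.coe_le_coe, coe_nnnorm, NNReal.coe_tsum]
    simp only [coe_nnnorm]
    exact norm_tsum_le_tsum_norm hs'

lemma rpow_sub_one_mul (x : ℝ≥0∞) {r : ℝ} (hr : 1 ≤ r) : x ^ (r - 1) * x = x ^ r := by
  calc x ^ (r-1) * x = x ^ (r-1) * x ^ (1:ℝ) := by rw [ENNReal.rpow_one]
    _ = x ^ (r - 1 + 1) := (ENNReal.rpow_add_of_nonneg _ _ (by linarith) zero_le_one).symm
    _ = x ^ r := by norm_num

/-- `∑ aₖ^r ≤ (∑ aₖ)^r` for `r ≥ 1`. -/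
lemma tsum_rpow_le {ι : Type*} [Countable ι] (a : ι → ℝ≥0∞) {r : ℝ} (hr : 1 ≤ r) :
    ∑' k, a k ^ r ≤ (∑' k, a k) ^ r := by
  have h1 : ∀ k, a k ^ r ≤ (∑' k, a k) ^ (r - 1) * a k := by
    intro k
    calc a k ^ r = a k ^ (r - 1) * a k := (rpow_sub_one_mul _ hr).symm
      _ ≤ (∑' k, a k) ^ (r - 1) * a k :=
          mul_le_mul_left (ENNReal.rpow_le_rpow (ENNReal.le_tsum k) (by linarith)) _
  calc ∑' k, a k ^ r ≤ ∑' k, (∑' k, a k) ^ (r - 1) * a k := ENNReal.tsum_le_tsum h1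
    _ = (∑' k, a k) ^ (r - 1) * ∑' k, a k := ENNReal.tsum_mul_left
    _ = (∑' k, a k) ^ r := rpow_sub_one_mul _ hr

/-- Hölder's inequality for `ℝ≥0∞`-valued sums. -/
lemma tsum_mul_le_Lp_mul_Lq {ι : Type*} [Countable ι] [MeasurableSpace ι]
    [MeasurableSingletonClass ι] (a b : ι → ℝ≥0∞) {r r' : ℝ} (hrr' : r.HolderConjugate r') :
    ∑' k, a k * b k ≤ (∑' k, a k ^ r) ^ (1/r) * (∑' k, b k ^ r') ^ (1/r') := by
  have h := ENNReal.lintegral_mul_le_Lp_mul_Lq (Measure.count : Measure ι) hrr'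
    (measurable_of_countable a).aemeasurable (measurable_of_countable b).aemeasurable
  simp only [Pi.mul_apply, lintegral_count] at h
  exact h

end S8Aux
end S8Aux2
noncomputable section S8Aux3
namespace S8Aux
open MeasureTheory Filter Finset Metric Set Complex
open scoped ENNReal NNReal Topology

variable {d : ℕ}

/-- The key synthesis estimate: `‖∑ₖ eₖ Ψ(·+k)‖_{L_r}^r ≤ ‖per Ψ‖_{L_r(cube)}^r ⬝ ‖e‖_{ℓ_r}^r`. -/
lemma synth {Ψ : Rd d → ℝ≥0∞} (hΨ : AEMeasurable Ψ volume) (e : (Fin d → ℤ) → ℝ≥0∞)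
    {r : ℝ} (hr : 1 ≤ r) :
    ∫⁻ x, (∑' k : Fin d → ℤ, e k * Ψ (x + intVec k)) ^ r
      ≤ (∫⁻ u in cube d, per Ψ u ^ r) * ∑' k : Fin d → ℤ, e k ^ r := by
  have hΨk : ∀ c : Rd d, AEMeasurable (fun x : Rd d => Ψ (x + c)) volume :=
    aemeas_comp_add hΨ
  rcases eq_or_lt_of_le hr with hr1 | hr1
  · -- r = 1
    simp only [← hr1, ENNReal.rpow_one]
    rw [lintegral_tsum fun k => (hΨk _).const_mul _]
    have he : ∀ k : Fin d → ℤ, ∫⁻ x, e k * Ψ (x + intVec k)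
        = e k * ∫⁻ u in cube d, per Ψ u := by
      intro k
      rw [lintegral_const_mul'' _ (hΨk _), lintegral_comp_add, lintegral_eq_cube_per hΨ]
    rw [tsum_congr he, ENNReal.tsum_mul_right]
    exact (mul_comm _ _).le
  · -- 1 < r
    have hr0 : r ≠ 0 := by linarith
    set r' := Real.conjExponent r with hr'def
    have hconj : r.HolderConjugate r' := Real.HolderConjugate.conjExponent hr1
    have hr'0 : r' ≠ 0 := hconj.symm.ne_zero
    have hinv : 1/r + 1/r' = 1 := by
      rw [one_div, one_div]; exact hconj.inv_add_inv_eq_one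
    have hrnn : (0:ℝ) ≤ r := by linarith
    have h1r : (0:ℝ) ≤ 1/r := one_div_nonneg.2 (by linarith)
    have h1r' : (0:ℝ) ≤ 1/r' := one_div_nonneg.2 hconj.symm.pos.le
    have hrr' : (1/r') * r = r - 1 := by
      have : (1:ℝ)/r' = 1 - 1/r := by linarith
      rw [this]
      field_simp
    rw [lintegral_eq_tsum_cube (fun x => (∑' k : Fin d → ℤ, e k * Ψ (x + intVec k)) ^ r)]
    have key : ∀ (j : Fin d → ℤ) (u : Rd d),
        (∑' k : Fin d → ℤ, e k * Ψ (u + intVec j + intVec k)) ^ r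
          ≤ (∑' l : Fin d → ℤ, e (l - j) ^ r * Ψ (u + intVec l)) * per Ψ u ^ (r - 1) := by
      intro j u
      have hre : (∑' k : Fin d → ℤ, e k * Ψ (u + intVec j + intVec k))
          = ∑' l : Fin d → ℤ, e (l - j) * Ψ (u + intVec l) := by
        rw [← (Equiv.addRight j).tsum_eq fun l => e (l - j) * Ψ (u + intVec l)]
        refine tsum_congr fun k => ?_
        have h1 : (Equiv.addRight j) k = k + j := rfl
        rw [h1, add_sub_cancel_right]
        congr 2
        rw [intVec_add]
        abel
      rw [hre]
      have hold : (∑' l : Fin d → ℤ, e (l - j) * Ψ (u + intVec l))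
          ≤ (∑' l : Fin d → ℤ, e (l - j) ^ r * Ψ (u + intVec l)) ^ (1/r)
            * per Ψ u ^ (1/r') := by
        have h1 : (∑' l : Fin d → ℤ, e (l - j) * Ψ (u + intVec l))
            = ∑' l : Fin d → ℤ,
                (e (l - j) * Ψ (u + intVec l) ^ (1/r)) * Ψ (u + intVec l) ^ (1/r') := by
          refine tsum_congr fun l => ?_
          rw [mul_assoc, ← ENNReal.rpow_add_of_nonneg _ _ h1r h1r',
            hinv, ENNReal.rpow_one]
        rw [h1]
        refine le_trans (tsum_mul_le_Lp_mul_Lq _ _ hconj) ?_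
        have h2 : ∀ l : Fin d → ℤ, (e (l - j) * Ψ (u + intVec l) ^ (1/r)) ^ r
            = e (l - j) ^ r * Ψ (u + intVec l) := by
          intro l
          rw [ENNReal.mul_rpow_of_nonneg _ _ hrnn, ← ENNReal.rpow_mul,
            one_div_mul_cancel hr0, ENNReal.rpow_one]
        have h3 : ∀ l : Fin d → ℤ, (Ψ (u + intVec l) ^ (1/r')) ^ r' = Ψ (u + intVec l) := by
          intro l
          rw [← ENNReal.rpow_mul, one_div_mul_cancel hr'0, ENNReal.rpow_one]
        rw [tsum_congr h2, tsum_congr h3]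
        rfl
      calc (∑' l : Fin d → ℤ, e (l - j) * Ψ (u + intVec l)) ^ r
          ≤ ((∑' l : Fin d → ℤ, e (l - j) ^ r * Ψ (u + intVec l)) ^ (1/r)
              * per Ψ u ^ (1/r')) ^ r := ENNReal.rpow_le_rpow hold hrnn
        _ = (∑' l : Fin d → ℤ, e (l - j) ^ r * Ψ (u + intVec l)) * per Ψ u ^ (r - 1) := by
            rw [ENNReal.mul_rpow_of_nonneg _ _ hrnn, ← ENNReal.rpow_mul,
              ← ENNReal.rpow_mul, one_div_mul_cancel hr0, ENNReal.rpow_one, hrr']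
    calc ∑' j : Fin d → ℤ, ∫⁻ u in cube d, (∑' k : Fin d → ℤ, e k * Ψ (u + intVec j + intVec k)) ^ r
        ≤ ∑' j : Fin d → ℤ, ∫⁻ u in cube d,
            (∑' l : Fin d → ℤ, e (l - j) ^ r * Ψ (u + intVec l)) * per Ψ u ^ (r - 1) :=
          ENNReal.tsum_le_tsum fun j => lintegral_mono (key j)
      _ = ∫⁻ u in cube d, ∑' j : Fin d → ℤ,
            (∑' l : Fin d → ℤ, e (l - j) ^ r * Ψ (u + intVec l)) * per Ψ u ^ (r - 1) :=
          (lintegral_tsum fun j => ((AEMeasurable.ennreal_tsum fun l =>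
            ((hΨk (intVec l)).restrict.const_mul _)).mul
              (((aemeas_per hΨ).restrict).pow_const _))).symm
      _ = ∫⁻ u in cube d, per Ψ u ^ r * ∑' k : Fin d → ℤ, e k ^ r := by
          refine lintegral_congr fun u => ?_
          rw [ENNReal.tsum_mul_right]
          have hsw : (∑' j : Fin d → ℤ, ∑' l : Fin d → ℤ, e (l - j) ^ r * Ψ (u + intVec l))
              = per Ψ u * ∑' k : Fin d → ℤ, e k ^ r := by
            rw [ENNReal.tsum_comm]
            calc ∑' l : Fin d → ℤ, ∑' j : Fin d → ℤ, e (l - j) ^ r * Ψ (u + intVec l)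
                = ∑' l : Fin d → ℤ, (∑' j : Fin d → ℤ, e (l - j) ^ r) * Ψ (u + intVec l) := by
                  refine tsum_congr fun l => ?_
                  rw [ENNReal.tsum_mul_right]
              _ = ∑' l : Fin d → ℤ, (∑' k : Fin d → ℤ, e k ^ r) * Ψ (u + intVec l) := by
                  refine tsum_congr fun l => ?_
                  congr 1
                  exact (Equiv.subLeft l).tsum_eq fun m => e m ^ r
              _ = (∑' k : Fin d → ℤ, e k ^ r) * ∑' l : Fin d → ℤ, Ψ (u + intVec l) :=
                  ENNReal.tsum_mul_left
              _ = per Ψ u * ∑' k : Fin d → ℤ, e k ^ r := mul_comm _ _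
          rw [hsw]
          calc per Ψ u * (∑' k : Fin d → ℤ, e k ^ r) * per Ψ u ^ (r - 1)
              = per Ψ u ^ (r - 1) * per Ψ u * (∑' k : Fin d → ℤ, e k ^ r) := by ring
            _ = per Ψ u ^ r * ∑' k : Fin d → ℤ, e k ^ r := by rw [rpow_sub_one_mul _ hr]
      _ = (∫⁻ u in cube d, per Ψ u ^ r) * ∑' k : Fin d → ℤ, e k ^ r :=
          lintegral_mul_const'' _ (((aemeas_per hΨ).restrict).pow_const _)

end S8Aux
end S8Aux3
open S8Aux in
/-- boundedness of the quasi-projection operator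
`∑_k ⟨f, φ̃_{0k}⟩ φ_{0k}` in `L_{p,1/w}`. -/
theorem statement8 {d : ℕ} (p q : ℝ≥0∞) (hp : 1 ≤ p) (hpq : 1 / p + 1 / q = 1)
    (α : ℝ) (hα : 0 < α) (w wstar : Rd d → ℝ) (cw : ℝ) (hw : IsWeight α w wstar cw)
    (φ φt : Rd d → ℂ) (hφ : MemLL p wstar φ) (hφt : MemLL q wstar φt)
    (f : Rd d → ℂ) (hf : MemWLp p (invW w) f) :
    wNorm p (invW w)
        (fun x => ∑' k : Fin d → ℤ, innerProd f (transl φt k) * φ (x + intVec k)) ≤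
      LLnorm p wstar φ * LLnorm q wstar φt * wNorm p (invW w) f := by
  classical
  obtain ⟨hφm, -⟩ := hφ
  obtain ⟨hφtm, -⟩ := hφt
  obtain ⟨hfm, -⟩ := hf
  -- basic facts about the weight w
  have hwpos : ∀ x : Rd d, (0:ℝ) < w x := fun x => lt_of_lt_of_le zero_lt_one (hw.one_le x)
  have hw1 : ∀ x : Rd d, (1:ℝ≥0∞) ≤ (‖w x‖₊ : ℝ≥0∞) := by
    intro x
    have h := ennnorm_mono_of_nonneg zero_le_one (hw.one_le x)
    simpa using h
  have hwne0 : ∀ x : Rd d, (‖w x‖₊ : ℝ≥0∞) ≠ 0 :=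
    fun x => (lt_of_lt_of_le zero_lt_one (hw1 x)).ne'
  have hwnetop : ∀ x : Rd d, (‖w x‖₊ : ℝ≥0∞) ≠ ⊤ := fun x => ENNReal.coe_ne_top
  have hwmeas : Measurable fun x : Rd d => (‖w x‖₊ : ℝ≥0∞) :=
    (hw.continuous.nnnorm.measurable).coe_nnreal_ennreal
  -- the measurable submultiplicative majorant H
  obtain ⟨D, hDc, hDd⟩ := TopologicalSpace.exists_countable_dense (Rd d)
  haveI : Countable D := hDc.to_subtype
  set H : Rd d → ℝ≥0∞ :=
    fun x => ⨆ y : D, (‖w (x + (y : Rd d))‖₊ : ℝ≥0∞) / (‖w (y : Rd d)‖₊ : ℝ≥0∞) with hHdef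
  have hHmeas : Measurable H :=
    Measurable.iSup fun y => (hwmeas.comp (measurable_add_const _)).div measurable_const
  have hcw : Continuous fun z : Rd d => (‖w z‖₊ : ℝ≥0∞) :=
    ENNReal.continuous_coe.comp hw.continuous.nnnorm
  have hHle : ∀ x y : Rd d, (‖w (x + y)‖₊ : ℝ≥0∞) ≤ H x * (‖w y‖₊ : ℝ≥0∞) := by
    intro x y
    obtain ⟨u, hu_mem, hu_lim⟩ := mem_closure_iff_seq_limit.1 (hDd y)
    have hn : ∀ n, (‖w (x + u n)‖₊ : ℝ≥0∞) ≤ H x * (‖w (u n)‖₊ : ℝ≥0∞) := by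
      intro n
      have h1 : (‖w (x + u n)‖₊ : ℝ≥0∞) / (‖w (u n)‖₊ : ℝ≥0∞) ≤ H x :=
        le_iSup_of_le (⟨u n, hu_mem n⟩ : D) le_rfl
      exact (ENNReal.div_le_iff (hwne0 _) (hwnetop _)).1 h1
    have hl1 : Tendsto (fun n => (‖w (x + u n)‖₊ : ℝ≥0∞)) atTop (𝓝 (‖w (x + y)‖₊ : ℝ≥0∞)) :=
      ((hcw.comp (continuous_const.add continuous_id)).tendsto y).comp hu_lim
    have hl2 : Tendsto (fun n => H x * (‖w (u n)‖₊ : ℝ≥0∞)) atTop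
        (𝓝 (H x * (‖w y‖₊ : ℝ≥0∞))) :=
      ENNReal.Tendsto.const_mul ((hcw.tendsto y).comp hu_lim) (Or.inl (hwne0 y))
    exact le_of_tendsto_of_tendsto' hl1 hl2 hn
  have hHwstar : ∀ x, H x ≤ (‖wstar x‖₊ : ℝ≥0∞) := by
    intro x
    refine iSup_le fun y => ?_
    rw [ENNReal.div_le_iff (hwne0 _) (hwnetop _)]
    calc (‖w (x + (y:Rd d))‖₊ : ℝ≥0∞) ≤ (‖wstar x * w (y:Rd d)‖₊ : ℝ≥0∞) :=
          ennnorm_mono_of_nonneg (hwpos _).le (hw.submult x y)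
      _ = (‖wstar x‖₊ : ℝ≥0∞) * (‖w (y:Rd d)‖₊ : ℝ≥0∞) := by
          rw [nnnorm_mul, ENNReal.coe_mul]
  -- building blocks
  set Ψφ : Rd d → ℝ≥0∞ := fun z => (‖φ z‖₊ : ℝ≥0∞) * H z with hΨφdef
  set Ψt : Rd d → ℝ≥0∞ := fun z => (‖φt z‖₊ : ℝ≥0∞) * H z with hΨtdef
  set F : Rd d → ℝ≥0∞ := fun x => (‖(invW w x : ℂ) * f x‖₊ : ℝ≥0∞) with hFdef
  have hΨφmeas : AEMeasurable Ψφ volume := hφm.enorm.mul hHmeas.aemeasurable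
  have hΨtmeas : AEMeasurable Ψt volume := hφtm.enorm.mul hHmeas.aemeasurable
  have hFmeas : AEMeasurable F volume := by
    have hc : Continuous fun x : Rd d => ((invW w x : ℝ) : ℂ) :=
      Complex.continuous_ofReal.comp (hw.continuous.inv₀ fun x => (hwpos x).ne')
    exact (hc.aestronglyMeasurable.mul hfm).enorm
  have hinvnn : ∀ x : Rd d, (‖(invW w x : ℂ)‖₊ : ℝ≥0∞) = (‖w x‖₊ : ℝ≥0∞)⁻¹ := by
    intro x
    rw [show (invW w x : ℂ) = ((w x)⁻¹ : ℝ) from rfl, Complex.nnnorm_real, nnnorm_inv,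
      ENNReal.coe_inv (nnnorm_ne_zero_iff.2 (hwpos x).ne')]
  have hFval : ∀ y : Rd d, (‖f y‖₊ : ℝ≥0∞) = F y * (‖w y‖₊ : ℝ≥0∞) := by
    intro y
    rw [hFdef]
    simp only [nnnorm_mul, ENNReal.coe_mul, hinvnn y]
    rw [mul_comm ((‖w y‖₊ : ℝ≥0∞))⁻¹ _, mul_assoc,
      ENNReal.inv_mul_cancel (hwne0 y) (hwnetop y), mul_one]
  -- the coefficients
  set c : (Fin d → ℤ) → ℝ≥0∞ := fun k => ∫⁻ y, F y * Ψt (y + intVec k) with hcdef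
  have hFΨt : ∀ k : Fin d → ℤ, AEMeasurable (fun y => F y * Ψt (y + intVec k)) volume :=
    fun k => hFmeas.mul (aemeas_comp_add hΨtmeas _)
  -- coefficient bound
  have hak : ∀ k : Fin d → ℤ, (‖innerProd f (transl φt k)‖₊ : ℝ≥0∞)
      ≤ c k * (‖w (intVec k)‖₊ : ℝ≥0∞) := by
    intro k
    calc (‖innerProd f (transl φt k)‖₊ : ℝ≥0∞)
        ≤ ∫⁻ y, (‖f y * (starRingEnd ℂ) (φt (y + intVec k))‖₊ : ℝ≥0∞) :=
          enorm_integral_le_lintegral_enorm _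
      _ ≤ ∫⁻ y, (F y * Ψt (y + intVec k)) * (‖w (intVec k)‖₊ : ℝ≥0∞) := by
          refine lintegral_mono fun y => ?_
          rw [nnnorm_mul, ENNReal.coe_mul, RCLike.nnnorm_conj, hFval y]
          have hwy : (‖w y‖₊ : ℝ≥0∞) ≤ H (y + intVec k) * (‖w (intVec k)‖₊ : ℝ≥0∞) := by
            have h := hHle (y + intVec k) (-(intVec k))
            have he : (y + intVec k) + -(intVec k) = y := by abel
            rw [he, hw.even (intVec k)] at h
            exact h
          calc F y * (‖w y‖₊:ℝ≥0∞) * (‖φt (y + intVec k)‖₊:ℝ≥0∞)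
              ≤ F y * (H (y + intVec k) * (‖w (intVec k)‖₊:ℝ≥0∞))
                  * (‖φt (y + intVec k)‖₊:ℝ≥0∞) := by gcongr
            _ = (F y * ((‖φt (y + intVec k)‖₊:ℝ≥0∞) * H (y + intVec k)))
                  * (‖w (intVec k)‖₊:ℝ≥0∞) := by ring
            _ = (F y * Ψt (y + intVec k)) * (‖w (intVec k)‖₊:ℝ≥0∞) := rfl
      _ = c k * (‖w (intVec k)‖₊ : ℝ≥0∞) := lintegral_mul_const'' _ (hFΨt k)
  -- pointwise master bound
  have hEg : ∀ x : Rd d,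
      (‖(invW w x : ℂ) * ∑' k : Fin d → ℤ, innerProd f (transl φt k) * φ (x + intVec k)‖₊ : ℝ≥0∞)
        ≤ ∑' k : Fin d → ℤ, c k * Ψφ (x + intVec k) := by
    intro x
    rw [nnnorm_mul, ENNReal.coe_mul, hinvnn x]
    calc (‖w x‖₊ : ℝ≥0∞)⁻¹
          * (‖∑' k : Fin d → ℤ, innerProd f (transl φt k) * φ (x + intVec k)‖₊ : ℝ≥0∞)
        ≤ (‖w x‖₊ : ℝ≥0∞)⁻¹
            * ∑' k : Fin d → ℤ, (‖innerProd f (transl φt k) * φ (x + intVec k)‖₊ : ℝ≥0∞) :=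
          mul_le_mul_right (enorm_tsum_le _) _
      _ = ∑' k : Fin d → ℤ,
            (‖w x‖₊ : ℝ≥0∞)⁻¹ * (‖innerProd f (transl φt k) * φ (x + intVec k)‖₊ : ℝ≥0∞) :=
          ENNReal.tsum_mul_left.symm
      _ ≤ ∑' k : Fin d → ℤ, c k * Ψφ (x + intVec k) := by
          refine ENNReal.tsum_le_tsum fun k => ?_
          rw [nnnorm_mul, ENNReal.coe_mul]
          have hWk : (‖w (intVec k)‖₊:ℝ≥0∞) * ((‖w x‖₊ : ℝ≥0∞))⁻¹ ≤ H (x + intVec k) := by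
            have h := hHle (x + intVec k) (-x)
            have he : (x + intVec k) + -x = intVec k := by abel
            rw [he, hw.even x] at h
            rw [← div_eq_mul_inv]
            exact (ENNReal.div_le_iff (hwne0 x) (hwnetop x)).2 h
          calc (‖w x‖₊:ℝ≥0∞)⁻¹
                * ((‖innerProd f (transl φt k)‖₊:ℝ≥0∞) * (‖φ (x + intVec k)‖₊:ℝ≥0∞))
              ≤ (‖w x‖₊:ℝ≥0∞)⁻¹
                  * ((c k * (‖w (intVec k)‖₊:ℝ≥0∞)) * (‖φ (x + intVec k)‖₊:ℝ≥0∞)) := by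
                gcongr
                exact hak k
            _ = c k * (‖φ (x + intVec k)‖₊:ℝ≥0∞)
                  * ((‖w (intVec k)‖₊:ℝ≥0∞) * ((‖w x‖₊:ℝ≥0∞))⁻¹) := by ring
            _ ≤ c k * (‖φ (x + intVec k)‖₊:ℝ≥0∞) * H (x + intVec k) :=
                mul_le_mul_right hWk _
            _ = c k * Ψφ (x + intVec k) := by rw [hΨφdef, mul_assoc]
  -- comparison of periodizations with perSum
  have hperφ : ∀ x, per Ψφ x ≤ perSum wstar φ x :=
    fun x => ENNReal.tsum_le_tsum fun k => mul_le_mul_right (hHwstar _) _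
  have hpert : ∀ x, per Ψt x ≤ perSum wstar φt x :=
    fun x => ENNReal.tsum_le_tsum fun k => mul_le_mul_right (hHwstar _) _
  -- case analysis on p
  by_cases hptop : p = ⊤
  · -- p = ⊤, q = 1
    subst hptop
    have hq1 : q = 1 := by
      rw [one_div, one_div, ENNReal.inv_top, zero_add, ENNReal.inv_eq_one] at hpq
      exact hpq
    subst hq1
    have hN : wNorm ⊤ (invW w) f = essSup F volume := by
      rw [wNorm, eLpNorm_exponent_top, eLpNormEssSup]; rfl
    set N := essSup F volume with hNdef
    have hFN : ∀ᵐ y, F y ≤ N := ae_le_essSup (isBoundedUnder_of ⟨⊤, fun _ => le_top⟩)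
    set It := ∫⁻ u in cube d, per Ψt u with hIt
    have hck : ∀ k, c k ≤ N * It := by
      intro k
      rw [hcdef]
      calc ∫⁻ y, F y * Ψt (y + intVec k)
          ≤ ∫⁻ y, N * Ψt (y + intVec k) :=
            lintegral_mono_ae (hFN.mono fun y hy => mul_le_mul_left hy _)
        _ = N * ∫⁻ y, Ψt (y + intVec k) := lintegral_const_mul'' _ (aemeas_comp_add hΨtmeas _)
        _ = N * It := by rw [lintegral_comp_add, lintegral_eq_cube_per hΨtmeas]
    set Bφ := essSup (per Ψφ) (volume.restrict (cube d)) with hBφ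
    have hEB : ∀ᵐ x : Rd d,
        (‖(invW w x:ℂ) * ∑' k : Fin d → ℤ, innerProd f (transl φt k) * φ (x + intVec k)‖₊:ℝ≥0∞)
          ≤ Bφ * It * N := by
      filter_upwards [ae_per_le_essSup (Ψ := Ψφ)] with x hx
      calc _ ≤ ∑' k : Fin d → ℤ, c k * Ψφ (x + intVec k) := hEg x
        _ ≤ ∑' k : Fin d → ℤ, (N * It) * Ψφ (x + intVec k) :=
            ENNReal.tsum_le_tsum fun k => mul_le_mul_left (hck k) _
        _ = (N * It) * per Ψφ x := ENNReal.tsum_mul_left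
        _ ≤ (N * It) * Bφ := mul_le_mul_right hx _
        _ = Bφ * It * N := by ring
    rw [wNorm, eLpNorm_exponent_top, eLpNormEssSup, hN]
    refine le_trans (essSup_le_of_ae_le _ hEB) ?_
    have h1 : Bφ ≤ LLnorm ⊤ wstar φ := by
      rw [LLnorm, if_pos rfl]
      exact le_trans (essSup_mono_ae (Filter.Eventually.of_forall hperφ))
        (essSup_mono_measure (Measure.absolutelyContinuous_of_le
          (Measure.restrict_mono cube_subset_unitCube le_rfl)))
    have h2 : It ≤ LLnorm 1 wstar φt := by
      rw [LLnorm, if_neg (by simp)]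
      simp only [ENNReal.toReal_one, ENNReal.rpow_one, one_div_one]
      calc It ≤ ∫⁻ u in cube d, perSum wstar φt u := lintegral_mono fun u => hpert u
        _ ≤ ∫⁻ u in unitCube d, perSum wstar φt u := lintegral_mono_set cube_subset_unitCube
    exact mul_le_mul' (mul_le_mul' h1 h2) le_rfl
  by_cases hp1 : p = 1
  · -- p = 1, q = ⊤
    subst hp1
    have hqtop : q = ⊤ := by
      rw [one_div, one_div, inv_one] at hpq
      have h0 : (1:ℝ≥0∞) + q⁻¹ = 1 + 0 := by simpa using hpq
      have h2 := (ENNReal.add_right_inj (by simp)).1 h0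
      rwa [ENNReal.inv_eq_zero] at h2
    subst hqtop
    have hN : wNorm 1 (invW w) f = ∫⁻ y, F y := by
      rw [wNorm, eLpNorm_one_eq_lintegral_enorm]; rfl
    set Bt := essSup (per Ψt) (volume.restrict (cube d)) with hBt
    have hsc : (∑' k : Fin d → ℤ, c k) ≤ (∫⁻ y, F y) * Bt := by
      have h1 : (∑' k : Fin d → ℤ, c k) = ∫⁻ y, F y * per Ψt y := by
        simp only [hcdef]
        rw [← lintegral_tsum fun k => hFΨt k]
        refine lintegral_congr fun y => ?_
        simp only [per]
        exact ENNReal.tsum_mul_left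
      rw [h1]
      calc ∫⁻ y, F y * per Ψt y ≤ ∫⁻ y, F y * Bt :=
            lintegral_mono_ae ((ae_per_le_essSup (Ψ := Ψt)).mono fun y hy =>
              mul_le_mul_right hy _)
        _ = (∫⁻ y, F y) * Bt := lintegral_mul_const'' _ hFmeas
    rw [wNorm, eLpNorm_one_eq_lintegral_enorm, hN]
    calc ∫⁻ x, (‖(invW w x:ℂ)
          * ∑' k : Fin d → ℤ, innerProd f (transl φt k) * φ (x + intVec k)‖₊:ℝ≥0∞)
        ≤ ∫⁻ x, ∑' k : Fin d → ℤ, c k * Ψφ (x + intVec k) := lintegral_mono fun x => hEg x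
      _ ≤ (∫⁻ u in cube d, per Ψφ u) * ∑' k : Fin d → ℤ, c k := by
          have h := synth hΨφmeas c (le_refl (1:ℝ))
          simpa [ENNReal.rpow_one] using h
      _ ≤ (∫⁻ u in cube d, per Ψφ u) * ((∫⁻ y, F y) * Bt) := mul_le_mul_right hsc _
      _ ≤ LLnorm 1 wstar φ * LLnorm ⊤ wstar φt * ∫⁻ y, F y := by
          have h1 : (∫⁻ u in cube d, per Ψφ u) ≤ LLnorm 1 wstar φ := by
            rw [LLnorm, if_neg (by simp)]
            simp only [ENNReal.toReal_one, ENNReal.rpow_one, one_div_one]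
            calc (∫⁻ u in cube d, per Ψφ u) ≤ ∫⁻ u in cube d, perSum wstar φ u :=
                  lintegral_mono fun u => hperφ u
              _ ≤ ∫⁻ u in unitCube d, perSum wstar φ u :=
                  lintegral_mono_set cube_subset_unitCube
          have h2 : Bt ≤ LLnorm ⊤ wstar φt := by
            rw [LLnorm, if_pos rfl]
            exact le_trans (essSup_mono_ae (Filter.Eventually.of_forall hpert))
              (essSup_mono_measure (Measure.absolutelyContinuous_of_le
                (Measure.restrict_mono cube_subset_unitCube le_rfl)))
          calc (∫⁻ u in cube d, per Ψφ u) * ((∫⁻ y, F y) * Bt)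
              = (∫⁻ u in cube d, per Ψφ u) * Bt * ∫⁻ y, F y := by ring
            _ ≤ LLnorm 1 wstar φ * LLnorm ⊤ wstar φt * ∫⁻ y, F y :=
                mul_le_mul' (mul_le_mul' h1 h2) le_rfl
  · -- 1 < p < ⊤
    have hp0 : p ≠ 0 := (lt_of_lt_of_le zero_lt_one hp).ne'
    have hp1' : 1 < p := lt_of_le_of_ne hp (Ne.symm hp1)
    have hq0 : q ≠ 0 := by
      intro h
      rw [h] at hpq
      simp at hpq
    have hqtop : q ≠ ⊤ := by
      intro h
      rw [h] at hpq
      simp only [one_div, ENNReal.inv_top, add_zero, ENNReal.inv_eq_one] at hpq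
      exact hp1 hpq
    have hq1 : 1 < q := by
      by_contra hle
      push_neg at hle
      have h1 : 1 ≤ 1/q := by rw [one_div]; exact ENNReal.one_le_inv.2 hle
      have h2 : 0 < 1/p := by rw [one_div]; exact ENNReal.inv_pos.2 hptop
      have h3 : (0:ℝ≥0∞) + 1 < 1/p + 1/q := by
        exact ENNReal.add_lt_add_of_lt_of_le (by simp) h2 h1
      rw [zero_add, hpq] at h3
      exact lt_irrefl _ h3
    set pr := p.toReal with hprdef
    set qr := q.toReal with hqrdef
    have hpr1 : 1 < pr := by
      rw [hprdef, ← ENNReal.toReal_one]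
      exact (ENNReal.toReal_lt_toReal (by simp) hptop).2 hp1'
    have hqr1 : 1 < qr := by
      rw [hqrdef, ← ENNReal.toReal_one]
      exact (ENNReal.toReal_lt_toReal (by simp) hqtop).2 hq1
    have hpr0 : (0:ℝ) < pr := by linarith
    have hqr0 : (0:ℝ) < qr := by linarith
    have hconj : pr.HolderConjugate qr := by
      refine Real.holderConjugate_iff.mpr ⟨hpr1, ?_⟩
      have h := congrArg ENNReal.toReal hpq
      rw [one_div, one_div, ENNReal.toReal_add (by simp [hp0]) (by simp [hq0]),
        ENNReal.toReal_inv, ENNReal.toReal_inv, ENNReal.toReal_one] at h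
      exact h
    have h1pr : (0:ℝ) ≤ 1/pr := one_div_nonneg.2 hpr0.le
    have h1qr : (0:ℝ) ≤ 1/qr := one_div_nonneg.2 hqr0.le
    have hN : wNorm p (invW w) f = (∫⁻ y, F y ^ pr) ^ (1/pr) := by
      rw [wNorm, eLpNorm_eq_lintegral_rpow_enorm_toReal hp0 hptop]; rfl
    set N := (∫⁻ y, F y ^ pr) ^ (1/pr) with hNdef2
    set At := (∫⁻ u in cube d, per Ψt u ^ qr) ^ (1/qr) with hAt
    set Aφ := (∫⁻ u in cube d, per Ψφ u ^ pr) ^ (1/pr) with hAφ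
    have hck : ∀ k, c k ≤ N * At := by
      intro k
      rw [hcdef]
      calc ∫⁻ y, F y * Ψt (y + intVec k)
          ≤ (∫⁻ y, F y ^ pr) ^ (1/pr) * (∫⁻ y, Ψt (y + intVec k) ^ qr) ^ (1/qr) := by
            have h := ENNReal.lintegral_mul_le_Lp_mul_Lq volume hconj hFmeas
              (aemeas_comp_add hΨtmeas (intVec k))
            simpa using h
        _ ≤ N * At := by
            refine mul_le_mul_right ?_ _
            refine ENNReal.rpow_le_rpow ?_ h1qr
            have h1 : ∫⁻ y, Ψt (y + intVec k) ^ qr = ∫⁻ y, Ψt y ^ qr :=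
              lintegral_comp_add (fun z => Ψt z ^ qr) (intVec k)
            rw [h1, lintegral_eq_cube_per (hΨtmeas.pow_const _)]
            refine lintegral_mono fun u => ?_
            exact tsum_rpow_le _ hqr1.le
    -- duality estimate for the sequence norm
    have hSK : ∀ K : Finset (Fin d → ℤ), (∑ k ∈ K, c k ^ pr) ≤ (N * At) ^ pr := by
      intro K
      by_cases hRtop : N * At = ⊤
      · rw [hRtop, ENNReal.top_rpow_of_pos hpr0]; exact le_top
      have hckfin : ∀ k, c k ≠ ⊤ := fun k =>
        (lt_of_le_of_lt (hck k) (lt_top_iff_ne_top.2 hRtop)).ne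
      have hSfin : (∑ k ∈ K, c k ^ pr) ≠ ⊤ :=
        (ENNReal.sum_lt_top.2 fun k _ =>
          ENNReal.rpow_lt_top_of_nonneg hpr0.le (hckfin k)).ne
      by_cases hS0 : (∑ k ∈ K, c k ^ pr) = 0
      · rw [hS0]; exact zero_le
      set e : (Fin d → ℤ) → ℝ≥0∞ := fun k => if k ∈ K then c k ^ (pr - 1) else 0 with hedef
      have hsum_e : (∑' k, e k ^ qr) = ∑ k ∈ K, c k ^ pr := by
        rw [tsum_eq_sum (s := K) (fun k hk => by
          simp [hedef, hk, ENNReal.zero_rpow_of_pos hqr0])]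
        refine Finset.sum_congr rfl fun k hk => ?_
        rw [hedef]
        simp only [if_pos hk]
        rw [← ENNReal.rpow_mul]
        congr 1
        exact hconj.sub_one_mul_conj
      have hsum_ec : (∑' k, e k * c k) = ∑ k ∈ K, c k ^ pr := by
        rw [tsum_eq_sum (s := K) (fun k hk => by simp [hedef, hk])]
        refine Finset.sum_congr rfl fun k hk => ?_
        rw [hedef]
        simp only [if_pos hk]
        exact rpow_sub_one_mul _ hpr1.le
      have hkey : (∑ k ∈ K, c k ^ pr) ≤ N * (At * (∑ k ∈ K, c k ^ pr) ^ (1/qr)) := by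
        calc (∑ k ∈ K, c k ^ pr) = ∑' k, e k * c k := hsum_ec.symm
          _ = ∫⁻ y, F y * ∑' k : Fin d → ℤ, e k * Ψt (y + intVec k) := by
              simp only [hcdef]
              calc ∑' k, e k * ∫⁻ y, F y * Ψt (y + intVec k)
                  = ∑' k, ∫⁻ y, e k * (F y * Ψt (y + intVec k)) := by
                    refine tsum_congr fun k => ?_
                    rw [lintegral_const_mul'' (e k) (hFΨt k)]
                _ = ∫⁻ y, ∑' k, e k * (F y * Ψt (y + intVec k)) :=
                    (lintegral_tsum fun k => (hFΨt k).const_mul (e k)).symm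
                _ = ∫⁻ y, F y * ∑' k : Fin d → ℤ, e k * Ψt (y + intVec k) := by
                    refine lintegral_congr fun y => ?_
                    rw [← ENNReal.tsum_mul_left]
                    exact tsum_congr fun k => by ring
          _ ≤ (∫⁻ y, F y ^ pr) ^ (1/pr)
                * (∫⁻ y, (∑' k : Fin d → ℤ, e k * Ψt (y + intVec k)) ^ qr) ^ (1/qr) := by
              have h := ENNReal.lintegral_mul_le_Lp_mul_Lq volume hconj hFmeas
                (AEMeasurable.ennreal_tsum fun k =>
                  (aemeas_comp_add hΨtmeas (intVec k)).const_mul (e k))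
              simpa using h
          _ ≤ N * ((∫⁻ u in cube d, per Ψt u ^ qr) * ∑' k, e k ^ qr) ^ (1/qr) :=
              mul_le_mul_right (ENNReal.rpow_le_rpow (synth hΨtmeas e hqr1.le) h1qr) _
          _ = N * (At * (∑ k ∈ K, c k ^ pr) ^ (1/qr)) := by
              rw [ENNReal.mul_rpow_of_nonneg _ _ h1qr, hsum_e]
      set S := ∑ k ∈ K, c k ^ pr with hSdef2
      have hq0' : S ^ (1/qr) ≠ 0 := by
        rw [Ne, ENNReal.rpow_eq_zero_iff]
        rintro (⟨h, -⟩ | ⟨h, -⟩)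
        · exact hS0 h
        · exact hSfin h
      have hqt' : S ^ (1/qr) ≠ ⊤ := ENNReal.rpow_ne_top_of_nonneg h1qr hSfin
      have hsplit : S = S ^ (1/pr) * S ^ (1/qr) := by
        rw [← ENNReal.rpow_add _ _ hS0 hSfin]
        have hh : 1/pr + 1/qr = 1 := by
          rw [one_div, one_div]
          exact hconj.inv_add_inv_eq_one
        rw [hh, ENNReal.rpow_one]
      have hle2 : S ^ (1/pr) * S ^ (1/qr) ≤ (N * At) * S ^ (1/qr) := by
        rw [← hsplit]
        calc S ≤ N * (At * S ^ (1/qr)) := hkey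
          _ = (N * At) * S ^ (1/qr) := by ring
      have hfin2 : S ^ (1/pr) ≤ N * At := (ENNReal.mul_le_mul_iff_left hq0' hqt').1 hle2
      calc S = (S ^ (1/pr)) ^ pr := by
            rw [← ENNReal.rpow_mul, one_div_mul_cancel hpr0.ne', ENNReal.rpow_one]
        _ ≤ (N * At) ^ pr := ENNReal.rpow_le_rpow hfin2 hpr0.le
    have hS : (∑' k : Fin d → ℤ, c k ^ pr) ^ (1/pr) ≤ N * At := by
      have h1 : (∑' k : Fin d → ℤ, c k ^ pr) ≤ (N * At) ^ pr := by
        rw [ENNReal.tsum_eq_iSup_sum]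
        exact iSup_le hSK
      calc (∑' k : Fin d → ℤ, c k ^ pr) ^ (1/pr) ≤ ((N*At)^pr)^(1/pr) :=
            ENNReal.rpow_le_rpow h1 h1pr
        _ = N * At := by
            rw [← ENNReal.rpow_mul, mul_one_div, div_self hpr0.ne', ENNReal.rpow_one]
    rw [wNorm, eLpNorm_eq_lintegral_rpow_enorm_toReal hp0 hptop, hN]
    calc (∫⁻ x, (‖(invW w x:ℂ)
          * ∑' k : Fin d → ℤ, innerProd f (transl φt k) * φ (x + intVec k)‖₊:ℝ≥0∞) ^ pr) ^ (1/pr)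
        ≤ (∫⁻ x, (∑' k : Fin d → ℤ, c k * Ψφ (x + intVec k)) ^ pr) ^ (1/pr) :=
          ENNReal.rpow_le_rpow
            (lintegral_mono fun x => ENNReal.rpow_le_rpow (hEg x) hpr0.le) h1pr
      _ ≤ ((∫⁻ u in cube d, per Ψφ u ^ pr) * ∑' k : Fin d → ℤ, c k ^ pr) ^ (1/pr) :=
          ENNReal.rpow_le_rpow (synth hΨφmeas c hpr1.le) h1pr
      _ = Aφ * (∑' k : Fin d → ℤ, c k ^ pr) ^ (1/pr) :=
          ENNReal.mul_rpow_of_nonneg _ _ h1pr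
      _ ≤ Aφ * (N * At) := mul_le_mul_right hS _
      _ ≤ LLnorm p wstar φ * LLnorm q wstar φt * (∫⁻ y, F y ^ pr) ^ (1/pr) := by
          have h1 : Aφ ≤ LLnorm p wstar φ := by
            rw [LLnorm, if_neg hptop]
            refine ENNReal.rpow_le_rpow ?_ h1pr
            calc ∫⁻ u in cube d, per Ψφ u ^ pr
                ≤ ∫⁻ u in cube d, perSum wstar φ u ^ pr :=
                  lintegral_mono fun u => ENNReal.rpow_le_rpow (hperφ u) hpr0.le
              _ ≤ ∫⁻ u in unitCube d, perSum wstar φ u ^ pr :=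
                  lintegral_mono_set cube_subset_unitCube
          have h2 : At ≤ LLnorm q wstar φt := by
            rw [LLnorm, if_neg hqtop]
            refine ENNReal.rpow_le_rpow ?_ h1qr
            calc ∫⁻ u in cube d, per Ψt u ^ qr
                ≤ ∫⁻ u in cube d, perSum wstar φt u ^ qr :=
                  lintegral_mono fun u => ENNReal.rpow_le_rpow (hpert u) hqr0.le
              _ ≤ ∫⁻ u in unitCube d, perSum wstar φt u ^ qr :=
                  lintegral_mono_set cube_subset_unitCube
          calc Aφ * (N * At) = Aφ * At * N := by ring
            _ ≤ LLnorm p wstar φ * LLnorm q wstar φt * N :=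
                mul_le_mul' (mul_le_mul' h1 h2) le_rfl
end
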